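/- arXiv:2206.03204 — 6 statements merged into one kernel-verified Lean document; each statement's English description precedes it below -/
import Mathlib

section
/- Let d ≥ 2 and let p_1, …, p_d ∈ ℝ^d satisfy Σ_{i=1}^d |p_i| = d (so the parallelotope Z = Σ_{i=1}^d [0, p_i] has the same mean width as the unit cube). Then (1/2)·max{ |Σ_{i=1}^{d} ε_i p_i| : ε_i ∈ {−1, 1} } ≥ √d / 2, with equality if and only if the vectors p_1, …, p_d form an orthonormal system. -/
/-- The maximum of `‖∑ᵢ εᵢ • pᵢ‖` over all sign vectors `ε ∈ {-1, 1}ⁿ`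
(twice the circumradius of the zonotope `∑ᵢ [0, pᵢ]`). -/
noncomputable def signMax {d n : ℕ} (p : Fin n → EuclideanSpace ℝ (Fin d)) : ℝ :=
  sSup {r : ℝ | ∃ ε : Fin n → ℝ, (∀ i, ε i = 1 ∨ ε i = -1) ∧ r = ‖∑ i, ε i • p i‖}

open Finset RealInnerProductSpace

/-- Greedy sign choice: there exist signs with `∑ ‖p i‖² ≤ ‖∑ ε i • p i‖²`. -/
lemma exists_signs_aux {d n : ℕ} (p : Fin n → EuclideanSpace ℝ (Fin d)) (s : Finset (Fin n)) :
    ∃ ε : Fin n → ℝ, (∀ i, ε i = 1 ∨ ε i = -1) ∧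
      ∑ i ∈ s, ‖p i‖ ^ 2 ≤ ‖∑ i ∈ s, ε i • p i‖ ^ 2 := by
  induction s using Finset.induction with
  | empty => exact ⟨fun _ => 1, fun _ => Or.inl rfl, by simp⟩
  | @insert a s ha ih =>
    obtain ⟨ε, hε, hle⟩ := ih
    set v := ∑ i ∈ s, ε i • p i with hv
    set c : ℝ := if 0 ≤ ⟪p a, v⟫ then 1 else -1 with hc
    refine ⟨Function.update ε a c, ?_, ?_⟩
    · intro i
      by_cases hi : i = a
      · rw [hi, Function.update_self, hc]
        split_ifs
        · exact Or.inl rfl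
        · exact Or.inr rfl
      · rw [Function.update_of_ne hi]; exact hε i
    · have hsum : ∑ i ∈ insert a s, Function.update ε a c i • p i = c • p a + v := by
        rw [Finset.sum_insert ha, Function.update_self]
        congr 1
        exact Finset.sum_congr rfl fun i hi => by
          rw [Function.update_of_ne (by rintro rfl; exact ha hi)]
      rw [hsum, norm_add_sq_real]
      have hcn : ‖c • p a‖ = ‖p a‖ := by
        rw [norm_smul]
        have : ‖c‖ = 1 := by
          rw [hc]; split_ifs <;> norm_num
        rw [this, one_mul]
      have hinner : 0 ≤ ⟪c • p a, v⟫ := by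
        rw [real_inner_smul_left, hc]
        split_ifs with h
        · linarith
        · nlinarith [lt_of_not_ge h]
      rw [Finset.sum_insert ha, hcn]
      nlinarith

/-- Dropping one index from a uniformly bounded family of signed sums. -/
lemma erase_bound {d n : ℕ} (p : Fin n → EuclideanSpace ℝ (Fin d)) (s : Finset (Fin n))
    (b : Fin n) (hb : b ∈ s) (C : ℝ)
    (h : ∀ ε : Fin n → ℝ, (∀ i, ε i = 1 ∨ ε i = -1) →
      ‖∑ i ∈ s, ε i • p i‖ ^ 2 ≤ C) :
    ∀ ε : Fin n → ℝ, (∀ i, ε i = 1 ∨ ε i = -1) →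
      ‖∑ i ∈ s.erase b, ε i • p i‖ ^ 2 ≤ C - ‖p b‖ ^ 2 := by
  intro ε hε
  set w := ∑ i ∈ s.erase b, ε i • p i with hw
  have hsum : ∀ c : ℝ, ∑ i ∈ s, Function.update ε b c i • p i = c • p b + w := by
    intro c
    rw [← Finset.add_sum_erase _ _ hb, Function.update_self]
    congr 1
    exact Finset.sum_congr rfl fun i hi => by
      rw [Function.update_of_ne (Finset.ne_of_mem_erase hi)]
  have hval : ∀ c : ℝ, c = 1 ∨ c = -1 → ∀ i,
      Function.update ε b c i = 1 ∨ Function.update ε b c i = -1 := by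
    intro c hc i
    by_cases hi : i = b
    · subst hi; rw [Function.update_self]; exact hc
    · rw [Function.update_of_ne hi]; exact hε i
  have h1 := h (Function.update ε b 1) (hval 1 (Or.inl rfl))
  have h2 := h (Function.update ε b (-1)) (hval (-1) (Or.inr rfl))
  rw [hsum 1, one_smul] at h1
  rw [hsum (-1)] at h2
  have h2' : ‖w - p b‖ ^ 2 ≤ C := by
    have : (-1 : ℝ) • p b + w = w - p b := by
      rw [neg_smul, one_smul]; abel
    rwa [this] at h2
  have e1 : ‖p b + w‖ ^ 2 = ‖p b‖ ^ 2 + 2 * ⟪p b, w⟫ + ‖w‖ ^ 2 := norm_add_sq_real _ _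
  have e2 : ‖w - p b‖ ^ 2 = ‖w‖ ^ 2 - 2 * ⟪w, p b⟫ + ‖p b‖ ^ 2 := norm_sub_sq_real _ _
  have ec : ⟪w, p b⟫ = ⟪p b, w⟫ := real_inner_comm _ _
  nlinarith

/-- Let `d ≥ 2` and `p₁, …, p_d ∈ ℝ^d` with `∑ᵢ ‖pᵢ‖ = d` (so the
parallelotope `∑ᵢ [0, pᵢ]` has the mean width of the unit cube). Then its circumradius
satisfies `(1/2) max {‖∑ εᵢ pᵢ‖ : εᵢ ∈ {-1,1}} ≥ √d / 2`, with equality if and only if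
`p₁, …, p_d` is an orthonormal system. -/
theorem parallelotope_circumradius_ge_of_mean_width_eq (d : ℕ) (hd : 2 ≤ d)
    (p : Fin d → EuclideanSpace ℝ (Fin d)) (hw : ∑ i, ‖p i‖ = (d : ℝ)) :
    Real.sqrt d / 2 ≤ (1 / 2) * signMax p ∧
    ((1 / 2) * signMax p = Real.sqrt d / 2 ↔ Orthonormal ℝ p) := by
  set S := {r : ℝ | ∃ ε : Fin d → ℝ, (∀ i, ε i = 1 ∨ ε i = -1) ∧ r = ‖∑ i, ε i • p i‖}
    with hSdef
  have hmax : signMax p = sSup S := rfl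
  -- boundedness
  have hbdd : BddAbove S := by
    refine ⟨(d : ℝ), ?_⟩
    rintro r ⟨ε, hε, rfl⟩
    calc ‖∑ i, ε i • p i‖ ≤ ∑ i, ‖ε i • p i‖ := norm_sum_le _ _
      _ = ∑ i, ‖p i‖ := by
          refine Finset.sum_congr rfl fun i _ => ?_
          rw [norm_smul]
          rcases hε i with h | h <;> simp [h]
      _ = (d : ℝ) := hw
  have hne : S.Nonempty := ⟨‖∑ i, (1 : ℝ) • p i‖, fun _ => 1, fun _ => Or.inl rfl, rfl⟩
  -- Cauchy–Schwarz: d ≤ ∑ ‖p i‖²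
  have hCS : (d : ℝ) ≤ ∑ i, ‖p i‖ ^ 2 := by
    have := sq_sum_le_card_mul_sum_sq (s := (Finset.univ : Finset (Fin d)))
      (f := fun i => ‖p i‖)
    rw [hw, Finset.card_univ, Fintype.card_fin] at this
    have hd0 : (0 : ℝ) < d := by positivity
    nlinarith
  -- the greedy signs
  obtain ⟨ε₀, hε₀, hle₀⟩ := exists_signs_aux p Finset.univ
  have hε₀S : ‖∑ i, ε₀ i • p i‖ ∈ S := ⟨ε₀, hε₀, rfl⟩
  have hbig : Real.sqrt d ≤ ‖∑ i, ε₀ i • p i‖ := by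
    have h1 : (d : ℝ) ≤ ‖∑ i, ε₀ i • p i‖ ^ 2 := le_trans hCS hle₀
    have := Real.sqrt_le_sqrt h1
    rwa [Real.sqrt_sq (norm_nonneg _)] at this
  have hge : Real.sqrt d ≤ sSup S := le_trans hbig (le_csSup hbdd hε₀S)
  constructor
  · rw [hmax]; linarith
  constructor
  · -- equality ⇒ orthonormal
    intro heq
    have hsup : sSup S = Real.sqrt d := by rw [hmax] at heq; linarith
    have hub : ∀ ε : Fin d → ℝ, (∀ i, ε i = 1 ∨ ε i = -1) →
        ‖∑ i, ε i • p i‖ ^ 2 ≤ (d : ℝ) := by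
      intro ε hε
      have hmem : ‖∑ i, ε i • p i‖ ∈ S := ⟨ε, hε, rfl⟩
      have h1 : ‖∑ i, ε i • p i‖ ≤ Real.sqrt d := hsup ▸ le_csSup hbdd hmem
      have := mul_self_le_mul_self (norm_nonneg _) h1
      rw [Real.mul_self_sqrt (Nat.cast_nonneg d)] at this
      nlinarith
    -- all norms are 1
    have hsq : ∑ i, ‖p i‖ ^ 2 = (d : ℝ) :=
      le_antisymm (le_trans hle₀ (hub ε₀ hε₀)) hCS
    have hnorm : ∀ i, ‖p i‖ = 1 := by
      have hzero : ∑ i, (‖p i‖ - 1) ^ 2 = 0 := by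
        have : ∑ i, (‖p i‖ - 1) ^ 2
            = ∑ i, ‖p i‖ ^ 2 - 2 * ∑ i, ‖p i‖ + (d : ℝ) := by
          rw [Finset.sum_congr rfl fun i _ => (by ring :
            (‖p i‖ - 1) ^ 2 = ‖p i‖ ^ 2 - 2 * ‖p i‖ + 1)]
          rw [Finset.sum_add_distrib, Finset.sum_sub_distrib, Finset.sum_const,
            Finset.card_univ, Fintype.card_fin, ← Finset.mul_sum]
          ring
        rw [this, hsq, hw]; ring
      intro i
      have := (Finset.sum_eq_zero_iff_of_nonneg
        (fun j _ => sq_nonneg (‖p j‖ - 1))).1 hzero i (Finset.mem_univ i)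
      nlinarith [this]
    -- key claim by downward induction
    have key : ∀ k : ℕ, ∀ s : Finset (Fin d), s.card + k = d →
        ∀ ε : Fin d → ℝ, (∀ i, ε i = 1 ∨ ε i = -1) →
        ‖∑ i ∈ s, ε i • p i‖ ^ 2 ≤ (s.card : ℝ) := by
      intro k
      induction k with
      | zero =>
        intro s hs ε hε
        have hsu : s = Finset.univ := by
          apply Finset.eq_univ_of_card
          simpa using hs
        subst hsu
        rw [Finset.card_univ, Fintype.card_fin]
        exact hub ε hε
      | succ k ih =>
        intro s hs ε hε
        have hlt : s.card < d := by omega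
        have : s ≠ Finset.univ := by
          intro h; rw [h, Finset.card_univ, Fintype.card_fin] at hlt; omega
        obtain ⟨b, hb⟩ : ∃ b, b ∉ s := by
          by_contra hcon
          push_neg at hcon
          exact this (Finset.eq_univ_iff_forall.2 hcon)
        have hbound := erase_bound p (insert b s) b (Finset.mem_insert_self b s)
          ((insert b s).card : ℝ)
          (ih (insert b s) (by rw [Finset.card_insert_of_notMem hb]; omega))
        have := hbound ε hε
        rw [Finset.erase_insert hb, Finset.card_insert_of_notMem hb, hnorm b] at this
        push_cast at this ⊢
        linarith
    -- orthogonality from pairs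
    rw [orthonormal_iff_ite]
    intro i j
    by_cases hij : i = j
    · subst hij
      simp only [if_pos rfl]
      rw [real_inner_self_eq_norm_sq, hnorm i]; norm_num
    · simp only [if_neg hij]
      set s : Finset (Fin d) := {i, j} with hs
      have hcard : s.card = 2 := by
        rw [hs, Finset.card_insert_of_notMem (by simpa using hij),
          Finset.card_singleton]
      have h1 := key (d - 2) s (by omega) (fun _ => 1) (fun _ => Or.inl rfl)
      have h2 := key (d - 2) s (by omega)
        (fun x => if x = j then (-1 : ℝ) else 1)
        (fun x => by by_cases h : x = j <;> simp [h])
      rw [hcard] at h1 h2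
      rw [hs, Finset.sum_pair hij] at h1 h2
      simp only [one_smul] at h1
      have h2' : ‖p i - p j‖ ^ 2 ≤ ((2 : ℕ) : ℝ) := by
        have e : (fun x => if x = j then (-1 : ℝ) else 1) i • p i
            + (fun x => if x = j then (-1 : ℝ) else 1) j • p j = p i - p j := by
          simp [hij, sub_eq_add_neg]
        rwa [e] at h2
      have e1 : ‖p i + p j‖ ^ 2 = ‖p i‖ ^ 2 + 2 * ⟪p i, p j⟫ + ‖p j‖ ^ 2 :=
        norm_add_sq_real _ _
      have e2 : ‖p i - p j‖ ^ 2 = ‖p i‖ ^ 2 - 2 * ⟪p i, p j⟫ + ‖p j‖ ^ 2 :=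
        norm_sub_sq_real _ _
      rw [hnorm i, hnorm j] at e1 e2
      push_cast at h1 h2'
      nlinarith
  · -- orthonormal ⇒ equality
    intro ho
    have hconst : ∀ r ∈ S, r = Real.sqrt d := by
      rintro r ⟨ε, hε, rfl⟩
      have hin : ⟪∑ i, ε i • p i, ∑ i, ε i • p i⟫ = (d : ℝ) := by
        rw [sum_inner]
        have : ∀ i : Fin d, ⟪ε i • p i, ∑ j, ε j • p j⟫ = 1 := by
          intro i
          rw [inner_sum]
          have : ∀ j : Fin d, ⟪ε i • p i, ε j • p j⟫
              = ε i * ε j * (if i = j then 1 else 0) := by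
            intro j
            rw [real_inner_smul_left, real_inner_smul_right,
              orthonormal_iff_ite.1 ho i j]
            ring
          rw [Finset.sum_congr rfl fun j _ => this j]
          rw [Finset.sum_eq_single i]
          · rcases hε i with h | h <;> rw [h] <;> norm_num
          · intro j _ hj; rw [if_neg (Ne.symm hj)]; ring
          · intro h; exact absurd (Finset.mem_univ i) h
        rw [Finset.sum_congr rfl fun i _ => this i]
        simp
      have hn2 : ‖∑ i, ε i • p i‖ ^ 2 = (d : ℝ) := by
        rw [← real_inner_self_eq_norm_sq]; exact hin
      rw [← hn2, Real.sqrt_sq (norm_nonneg _)]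
    have : sSup S = Real.sqrt d := by
      apply le_antisymm
      · exact csSup_le hne fun r hr => (hconst r hr).le
      · obtain ⟨r, hr⟩ := hne
        exact (hconst r hr) ▸ le_csSup hbdd hr
    rw [hmax, this]
    ring
end

section
/- Let d ≥ 2 and let p_1, …, p_{d+1} ∈ ℝ^d satisfy Σ_{i=1}^{d+1} p_i = 0 and Σ_{i=1}^{d+1} |p_i| = d+1. Then (1/2)·max{ |Σ_{i=1}^{d+1} ε_i p_i| : ε_i ∈ {−1, 1} } ≥ √(d+2)/2 if d is even, and ≥ (d+1)/(2√d) if d is odd; equality holds if and only if all p_i are unit vectors with ⟨p_i, p_j⟩ = −1/d for all i ≠ j, i.e., the zonotope Σ_{i=1}^{d+1}[0, p_i] is a regular rhombic dodecahedron. -/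
/-!
Put `n = d + 1` and `k = d / 2 + 1`. Flipping the signs on a set `S` changes `∑ i, pᵢ` by
`-2 ∑_{i ∈ S} pᵢ`, so for centered `p` the sign maximum is `2 max_S ‖∑_{i ∈ S} pᵢ‖`. Averaged
over the `k`-subsets, `‖∑_{i ∈ S} pᵢ‖²` equals `k (n - k) / (n d) · ∑ ‖pᵢ‖²`: the cross terms
`⟪pᵢ, pⱼ⟫` add up to `-∑ ‖pᵢ‖²` because `∑ pᵢ = 0`. Since `∑ ‖pᵢ‖ = n` gives `∑ ‖pᵢ‖² ≥ n`,
some `k`-subset sum has squared length at least `k (n - k) / d`, which is the square of the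
claimed bound. In the case of equality all `pᵢ` are unit vectors and all `k`-subset sums have the
same length; exchanging one element of such a subset gives `⟪pₐ - p_b, pₓ⟫ = 0`, so all inner
products coincide, and `∑ pᵢ = 0` forces their common value to be `-1 / d`. Conversely, for such a
configuration `‖∑_{i ∈ S} pᵢ‖² = #S (n - #S) / d`, which is largest at `#S = k`.
-/

open Finset RealInnerProductSpace

lemma circumradius_bound_eq_sqrt {d : ℕ} (hd : 0 < d) :
    (if Even d then √((d : ℝ) + 2) / 2 else ((d : ℝ) + 1) / (2 * √d))
      = √(((d / 2 + 1 : ℕ) : ℝ) * (d + 1 - (d / 2 + 1 : ℕ)) / d) := by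
  have hk : ((d / 2 + 1 : ℕ) : ℝ) ≤ d + 1 := by exact_mod_cast (show d / 2 + 1 ≤ d + 1 by omega)
  symm
  rw [Real.sqrt_eq_iff_eq_sq (by have := sub_nonneg.2 hk; positivity) (by split_ifs <;> positivity)]
  have hd' : (d : ℝ) ≠ 0 := by positivity
  rcases Nat.even_or_odd' d with ⟨a, rfl | rfl⟩
  · rw [if_pos (even_two_mul a), show 2 * a / 2 + 1 = a + 1 by omega, div_pow,
      Real.sq_sqrt (by positivity)]
    field_simp
    push_cast
    ring
  · rw [if_neg (Nat.not_even_iff_odd.2 (odd_two_mul_add_one a)),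
      show (2 * a + 1) / 2 + 1 = a + 1 by omega, div_pow, mul_pow, Real.sq_sqrt (by positivity)]
    field_simp
    push_cast
    ring

lemma sum_sq_eq_card_add_sum_sq_sub_one {ι : Type*} [Fintype ι] {a : ι → ℝ}
    (h : ∑ i, a i = Fintype.card ι) :
    ∑ i, a i ^ 2 = Fintype.card ι + ∑ i, (a i - 1) ^ 2 := by
  simp only [sub_sq, mul_one, one_pow, sum_add_distrib, sum_sub_distrib, ← mul_sum, h,
    sum_const, card_univ, nsmul_eq_mul]
  ring

lemma mul_sub_le_mul_sub_of_le_two_mul_of_two_mul_le {s k N : ℕ} (h₁ : N ≤ 2 * k)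
    (h₂ : 2 * k ≤ N + 1) : (s : ℝ) * (N - s) ≤ k * (N - k) := by
  have h : 0 ≤ ((s : ℝ) - k) * (s - (N - k)) := by
    rcases Nat.lt_or_ge N (s + k) with hs | hs
    · have hs' : (N : ℝ) + 1 ≤ s + k := by exact_mod_cast hs
      have hk : 2 * (k : ℝ) ≤ N + 1 := by exact_mod_cast h₂
      nlinarith
    · have hs' : (s : ℝ) + k ≤ N := by exact_mod_cast hs
      have hk : (N : ℝ) ≤ 2 * k := by exact_mod_cast h₁
      nlinarith
  nlinarith [h]

lemma cast_choose_sub_choose_mul {n m : ℕ} (hm : 2 ≤ m) (hmn : m ≤ n) :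
    (n : ℝ) * (n - 1) * ((n - 1).choose (m - 1) - (n - 2).choose (m - 2) : ℝ)
      = n.choose m * m * (n - m) := by
  obtain ⟨b, rfl⟩ : ∃ b, m = b + 2 := ⟨m - 2, by omega⟩
  obtain ⟨a, rfl⟩ : ∃ a, n = a + 2 := ⟨n - 2, by omega⟩
  have hnat :
      (a + 2) * (a + 1) * a.choose (b + 1) = (a + 2).choose (b + 2) * (b + 2) * (a - b) := by
    calc _ = (a + 2) * ((a + 1).choose (b + 1) * (a + 1 - (b + 1))) := by
          rw [← Nat.choose_mul_succ_eq]; ring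
      _ = _ := by rw [← mul_assoc, Nat.add_one_mul_choose_eq]; congr 1; omega
  have hpascal : ((a + 1).choose (b + 1) : ℝ) - a.choose b = a.choose (b + 1) := by
    rw [Nat.choose_succ_succ']; push_cast; ring
  simp only [show b + 2 - 1 = b + 1 by omega, show a + 2 - 1 = a + 1 by omega,
    Nat.add_sub_cancel, hpascal]
  push_cast
  have hreal := congrArg (Nat.cast (R := ℝ)) hnat
  push_cast [Nat.cast_sub (show b ≤ a by omega)] at hreal
  linear_combination hreal

lemma inner_sub_eq_zero_of_norm_add_eq {E : Type*} [NormedAddCommGroup E] [InnerProductSpace ℝ E]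
    {u v x : E} (huv : ‖u‖ = ‖v‖) (h : ‖u + x‖ = ‖v + x‖) : ⟪u - v, x⟫ = 0 := by
  have h2 := congrArg (· ^ 2) h
  simp only [norm_add_sq_real, huv] at h2
  rw [inner_sub_left]
  linarith

lemma eq_zero_of_forall_card_eq_sum_eq_zero {ι : Type*} [DecidableEq ι] {U : Finset ι} {r : ℕ}
    {w : ι → ℝ} (hr : 0 < r) (hrU : r < #U ∨ r = 1)
    (hw : ∀ R ⊆ U, #R = r → ∑ x ∈ R, w x = 0) : ∀ x ∈ U, w x = 0 := by
  rcases hrU with hrU | rfl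
  swap
  · intro x hx
    simpa using hw {x} (singleton_subset_iff.2 hx) (card_singleton x)
  have hconst : ∀ x ∈ U, ∀ y ∈ U, w x = w y := by
    intro x hx y hy
    rcases eq_or_ne x y with rfl | hxy
    · rfl
    obtain ⟨T, hTU, hT⟩ := exists_subset_card_eq (s := U \ {x, y}) (n := r - 1) (by
      rw [card_sdiff_of_subset (by simp [insert_subset_iff, hx, hy]), card_pair hxy]
      omega)
    have hxT : x ∉ T := fun h => by simpa using hTU h
    have hyT : y ∉ T := fun h => by simpa using hTU h
    have hTU' : T ⊆ U := hTU.trans sdiff_subset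
    have hx' := hw (insert x T) (insert_subset hx hTU') (by rw [card_insert_of_notMem hxT]; omega)
    have hy' := hw (insert y T) (insert_subset hy hTU') (by rw [card_insert_of_notMem hyT]; omega)
    rw [sum_insert hxT] at hx'
    rw [sum_insert hyT] at hy'
    linarith
  intro x hx
  obtain ⟨R, hRU, hR⟩ := exists_subset_card_eq hrU.le
  have hsum := hw R hRU hR
  rw [sum_congr rfl fun y hy => hconst y (hRU hy) x hx, sum_const, hR, nsmul_eq_mul] at hsum
  exact (mul_eq_zero.1 hsum).resolve_left (by positivity)

lemma norm_sq_sum_of_inner_eq {ι E : Type*} [DecidableEq ι] [NormedAddCommGroup E]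
    [InnerProductSpace ℝ E] {p : ι → E} (hunit : ∀ i, ‖p i‖ = 1) {c : ℝ}
    (hinner : ∀ i j, i ≠ j → ⟪p i, p j⟫ = c) (S : Finset ι) :
    ‖∑ i ∈ S, p i‖ ^ 2 = #S + #S * (#S - 1) * c := by
  have hrow : ∀ i ∈ S, ∑ j ∈ S, ⟪p i, p j⟫ = 1 + (#S - 1) * c := by
    intro i hi
    rw [← add_sum_erase _ _ hi, real_inner_self_eq_norm_sq, hunit, one_pow,
      sum_congr rfl fun j hj => hinner i j (ne_of_mem_erase hj).symm, sum_const,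
      card_erase_of_mem hi, nsmul_eq_mul, Nat.cast_pred (card_pos.2 ⟨i, hi⟩)]
  rw [← real_inner_self_eq_norm_sq, sum_inner]
  simp_rw [inner_sum]
  rw [sum_congr rfl hrow, sum_const, nsmul_eq_mul]
  ring

section Slice
variable {ι E : Type*} [Fintype ι] [DecidableEq ι] [NormedAddCommGroup E] [InnerProductSpace ℝ E]
  (p : ι → E)

lemma sum_norm_sq_sum_eq_sum_sum_card_mul_inner (𝒜 : Finset (Finset ι)) :
    ∑ S ∈ 𝒜, ‖∑ i ∈ S, p i‖ ^ 2
      = ∑ i, ∑ j, (#{S ∈ 𝒜 | i ∈ S ∧ j ∈ S} : ℝ) * ⟪p i, p j⟫ := by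
  simp_rw [card_filter, Nat.cast_sum, sum_mul, Nat.cast_ite, ite_mul, Nat.cast_one, one_mul,
    Nat.cast_zero, zero_mul, ← real_inner_self_eq_norm_sq, sum_inner, inner_sum]
  calc ∑ S ∈ 𝒜, ∑ i ∈ S, ∑ j ∈ S, ⟪p i, p j⟫
      = ∑ S ∈ 𝒜, ∑ i, ∑ j, if i ∈ S ∧ j ∈ S then ⟪p i, p j⟫ else 0 := by
        refine sum_congr rfl fun S _ => ?_
        simp [ite_and]
    _ = _ := by
      rw [sum_comm]
      exact sum_congr rfl fun i _ => sum_comm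

lemma card_filter_mem_and_mem_powersetCard {m : ℕ} (hm : 2 ≤ m) (i j : ι) :
    #{S ∈ powersetCard m univ | i ∈ S ∧ j ∈ S}
      = if i = j then (Fintype.card ι - 1).choose (m - 1)
        else (Fintype.card ι - 2).choose (m - 2) := by
  have h : ∀ S : Finset ι, (i ∈ S ∧ j ∈ S) ↔ {i, j} ⊆ S := by simp [insert_subset_iff]
  simp_rw [h]
  rw [card_filter_powersetCard_subset _ _ _ (subset_univ _) ?_, card_univ]
  · split_ifs with hij <;> simp [hij]
  · exact (card_le_two).trans hm

lemma sum_powersetCard_norm_sq_sum_of_sum_eq_zero (hp : ∑ i, p i = 0) {m : ℕ} (hm : 2 ≤ m)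
    (hmn : m ≤ Fintype.card ι) :
    (Fintype.card ι : ℝ) * (Fintype.card ι - 1) * ∑ S ∈ powersetCard m univ, ‖∑ i ∈ S, p i‖ ^ 2
      = (Fintype.card ι).choose m * m * (Fintype.card ι - m) * ∑ i, ‖p i‖ ^ 2 := by
  set A : ℝ := ↑((Fintype.card ι - 1).choose (m - 1))
  set B : ℝ := ↑((Fintype.card ι - 2).choose (m - 2))
  have hsplit (i j : ι) : (#{S ∈ powersetCard m univ | i ∈ S ∧ j ∈ S} : ℝ) * ⟪p i, p j⟫
      = B * ⟪p i, p j⟫ + if i = j then (A - B) * ⟪p i, p j⟫ else 0 := by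
    rw [card_filter_mem_and_mem_powersetCard hm, Nat.cast_ite]
    split_ifs <;> ring
  simp_rw [sum_norm_sq_sum_eq_sum_sum_card_mul_inner, hsplit, sum_add_distrib, sum_ite_eq,
    mem_univ, if_true, ← mul_sum, ← inner_sum, ← sum_inner, hp, inner_zero_left, mul_zero,
    zero_add, real_inner_self_eq_norm_sq, ← mul_assoc]
  rw [cast_choose_sub_choose_mul hm hmn]

lemma sum_powersetCard_norm_sq_sum_eq_sum_mul {n m : ℕ} (hcard : Fintype.card ι = n + 1)
    (hp : ∑ i, p i = 0) (hm : 2 ≤ m) (hmn : m ≤ n + 1) :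
    ∑ S ∈ powersetCard m univ, ‖∑ i ∈ S, p i‖ ^ 2
      = ∑ _S ∈ powersetCard m (univ : Finset ι),
          (m : ℝ) * (n + 1 - m) / n * ((∑ i, ‖p i‖ ^ 2) / (n + 1)) := by
  have h := sum_powersetCard_norm_sq_sum_of_sum_eq_zero p hp hm (hcard ▸ hmn)
  rw [hcard] at h
  push_cast at h
  have hn : (n : ℝ) ≠ 0 := by exact_mod_cast (show n ≠ 0 by omega)
  rw [sum_const, card_powersetCard, card_univ, hcard, nsmul_eq_mul]
  field_simp
  linear_combination h

lemma exists_card_eq_sqrt_le_norm_sum {n m : ℕ} (hcard : Fintype.card ι = n + 1)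
    (hp : ∑ i, p i = 0) (hw : ∑ i, ‖p i‖ = n + 1) (hm : 2 ≤ m) (hmn : m ≤ n + 1) :
    ∃ S : Finset ι, #S = m ∧ √((m : ℝ) * (n + 1 - m) / n) ≤ ‖∑ i ∈ S, p i‖ := by
  have hV : 0 ≤ (m : ℝ) * (n + 1 - m) / n := by
    have : (m : ℝ) ≤ n + 1 := by exact_mod_cast hmn
    have := sub_nonneg.2 this
    positivity
  have hT : (n : ℝ) + 1 ≤ ∑ i, ‖p i‖ ^ 2 := by
    rw [sum_sq_eq_card_add_sum_sq_sub_one (by rw [hw, hcard]; push_cast; rfl), hcard,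
      Nat.cast_add_one]
    exact le_add_of_nonneg_right (sum_nonneg fun i _ => sq_nonneg _)
  have hne : (powersetCard m (univ : Finset ι)).Nonempty :=
    powersetCard_nonempty.2 (by rwa [card_univ, hcard])
  obtain ⟨S, hS, hle⟩ := exists_le_of_sum_le hne (f := fun _ => (m : ℝ) * (n + 1 - m) / n)
    (g := fun S => ‖∑ i ∈ S, p i‖ ^ 2) (by
      rw [sum_powersetCard_norm_sq_sum_eq_sum_mul p hcard hp hm hmn]
      exact sum_le_sum fun S _ =>
        le_mul_of_one_le_right hV ((one_le_div (by positivity)).2 hT))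
  exact ⟨S, (mem_powersetCard.1 hS).2, (Real.sqrt_le_left (norm_nonneg _)).2 hle⟩

lemma forall_norm_eq_one_and_norm_sq_sum_eq_of_forall_le {n m : ℕ}
    (hcard : Fintype.card ι = n + 1) (hp : ∑ i, p i = 0) (hw : ∑ i, ‖p i‖ = n + 1) (hm : 2 ≤ m)
    (hmn : m ≤ n) (h : ∀ S : Finset ι, #S = m → ‖∑ i ∈ S, p i‖ ≤ √((m : ℝ) * (n + 1 - m) / n)) :
    (∀ i, ‖p i‖ = 1) ∧
      ∀ S : Finset ι, #S = m → ‖∑ i ∈ S, p i‖ ^ 2 = (m : ℝ) * (n + 1 - m) / n := by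
  set V : ℝ := (m : ℝ) * (n + 1 - m) / n
  have hV : 0 < V := by
    have : (m : ℝ) < n + 1 := by exact_mod_cast Nat.lt_succ_of_le hmn
    have := sub_pos.2 this
    have : (0 : ℝ) < m := by exact_mod_cast (show 0 < m by omega)
    have : (0 : ℝ) < n := by exact_mod_cast (show 0 < n by omega)
    positivity
  have hsq := sum_sq_eq_card_add_sum_sq_sub_one (a := fun i => ‖p i‖)
    (by rw [hw, hcard]; push_cast; rfl)
  rw [hcard, Nat.cast_add_one] at hsq
  have hle : ∀ S ∈ powersetCard m univ, ‖∑ i ∈ S, p i‖ ^ 2 ≤ V := fun S hS =>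
    (Real.le_sqrt (norm_nonneg _) hV.le).1 (h S (mem_powersetCard.1 hS).2)
  have hslice := sum_powersetCard_norm_sq_sum_eq_sum_mul p hcard hp hm (by omega)
  have hT : ∑ i, ‖p i‖ ^ 2 = n + 1 := by
    have hne : (powersetCard m (univ : Finset ι)).Nonempty :=
      powersetCard_nonempty.2 (by rw [card_univ, hcard]; omega)
    have h1 := hslice ▸ sum_le_sum hle
    rw [sum_const, sum_const, nsmul_eq_mul, nsmul_eq_mul] at h1
    have h3 : (∑ i, ‖p i‖ ^ 2) / (n + 1) ≤ 1 :=
      (mul_le_iff_le_one_right hV).1 (le_of_mul_le_mul_left h1 (by simpa using hne.card_pos))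
    rw [div_le_one (by positivity)] at h3
    linarith [sum_nonneg fun i (_ : i ∈ univ) => sq_nonneg (‖p i‖ - 1)]
  refine ⟨fun i => ?_, fun S hS => ?_⟩
  · have h0 : ∑ i, (‖p i‖ - 1) ^ 2 = 0 := by linarith
    have := (sum_eq_zero_iff_of_nonneg fun i _ => sq_nonneg (‖p i‖ - 1)).1 h0 i (mem_univ i)
    exact sub_eq_zero.1 (pow_eq_zero_iff two_ne_zero |>.1 this)
  · refine (sum_eq_sum_iff_of_le hle).1 ?_ S (mem_powersetCard.2 ⟨subset_univ S, hS⟩)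
    rw [hslice, hT, div_self (by positivity), mul_one]

lemma inner_sub_eq_zero_of_forall_card_eq_norm_sq_sum_eq (hunit : ∀ i, ‖p i‖ = 1) {k : ℕ}
    (hk : 2 ≤ k) (hkn : k + 2 ≤ Fintype.card ι ∨ k = 2) {c : ℝ}
    (hc : ∀ S : Finset ι, #S = k → ‖∑ i ∈ S, p i‖ ^ 2 = c) {a b x : ι} (hab : a ≠ b) (hxa : x ≠ a)
    (hxb : x ≠ b) : ⟪p a - p b, p x⟫ = 0 := by
  refine eq_zero_of_forall_card_eq_sum_eq_zero (U := {a, b}ᶜ) (r := k - 1)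
    (w := fun x => ⟪p a - p b, p x⟫) (by omega) ?_ ?_ x (by simp [hxa, hxb])
  · rw [card_compl, card_pair hab]
    omega
  intro R hR hRk
  have haR : a ∉ R := fun h => by simpa using hR h
  have hbR : b ∉ R := fun h => by simpa using hR h
  have hnorm (y : ι) (hyR : y ∉ R) : ‖∑ i ∈ insert y R, p i‖ ^ 2 = c :=
    hc _ (by rw [card_insert_of_notMem hyR]; omega)
  rw [← inner_sum]
  refine inner_sub_eq_zero_of_norm_add_eq (by rw [hunit, hunit]) ?_
  rw [← sq_eq_sq₀ (norm_nonneg _) (norm_nonneg _), ← sum_insert haR, ← sum_insert hbR,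
    hnorm a haR, hnorm b hbR]

lemma inner_eq_neg_inv_of_forall_card_eq_norm_sq_sum_eq {n : ℕ} (hcard : Fintype.card ι = n + 1)
    (hp : ∑ i, p i = 0) (hunit : ∀ i, ‖p i‖ = 1) {k : ℕ} (hk : 2 ≤ k) (hkn : k + 1 ≤ n ∨ k = 2)
    {c : ℝ} (hc : ∀ S : Finset ι, #S = k → ‖∑ i ∈ S, p i‖ ^ 2 = c) {i j : ι} (hij : i ≠ j) :
    ⟪p i, p j⟫ = -1 / n := by
  have hrow : ∀ x, ⟪p j, p x⟫ = ⟪p i, p j⟫ + if x = j then 1 - ⟪p i, p j⟫ else 0 := by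
    intro x
    split_ifs with hxj
    · rw [hxj, real_inner_self_eq_norm_sq, hunit, one_pow]
      ring
    rw [add_zero]
    rcases eq_or_ne x i with rfl | hxi
    · exact real_inner_comm _ _
    have := inner_sub_eq_zero_of_forall_card_eq_norm_sq_sum_eq p hunit hk (by omega) hc hxi
      (Ne.symm hxj) hij.symm
    rw [inner_sub_left, real_inner_comm] at this
    linarith
  have hsum : ∑ x, ⟪p j, p x⟫ = 0 := by rw [← inner_sum, hp, inner_zero_right]
  rw [sum_congr rfl fun x _ => hrow x, sum_add_distrib, sum_const, card_univ, hcard,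
    sum_ite_eq', if_pos (mem_univ j), nsmul_eq_mul] at hsum
  have hn : (n : ℝ) ≠ 0 := by
    have := Fintype.one_lt_card_iff_nontrivial.2 ⟨i, j, hij⟩
    rw [hcard] at this
    exact_mod_cast (show n ≠ 0 by omega)
  field_simp
  push_cast at hsum
  linarith

end Slice

lemma sum_ite_mem_neg_one_smul {ι E : Type*} [Fintype ι] [DecidableEq ι] [AddCommGroup E]
    [Module ℝ E] (p : ι → E) (S : Finset ι) :
    ∑ i, (if i ∈ S then (-1 : ℝ) else 1) • p i = ∑ i, p i - (2 : ℝ) • ∑ i ∈ S, p i := by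
  have h : ∀ i, (if i ∈ S then (-1 : ℝ) else 1) • p i
      = p i - if i ∈ S then (2 : ℝ) • p i else 0 := by
    intro i
    split_ifs <;> module
  simp_rw [h, sum_sub_distrib, sum_ite_mem, univ_inter, smul_sum]

section SignMax
variable {d n : ℕ} (p : Fin n → EuclideanSpace ℝ (Fin d))

lemma signMax_eq_sup'_of_sum_eq_zero (hp : ∑ i, p i = 0) :
    signMax p = univ.sup' univ_nonempty fun S : Finset (Fin n) => 2 * ‖∑ i ∈ S, p i‖ := by
  have hS (S : Finset (Fin n)) :
      ‖∑ i, (if i ∈ S then (-1 : ℝ) else 1) • p i‖ = 2 * ‖∑ i ∈ S, p i‖ := by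
    rw [sum_ite_mem_neg_one_smul, hp, zero_sub, norm_neg, norm_smul, Real.norm_two]
  rw [sup'_eq_csSup_image, coe_univ, Set.image_univ, signMax]
  congr 1
  ext r
  constructor
  · rintro ⟨ε, hε, rfl⟩
    refine ⟨({i | ε i = -1} : Finset (Fin n)), ?_⟩
    beta_reduce
    rw [← hS]
    congr 2
    funext i
    rcases hε i with h | h <;> norm_num [h]
  · rintro ⟨S, rfl⟩
    exact ⟨_, fun i => by split_ifs <;> simp, (hS S).symm⟩

lemma two_mul_norm_sum_le_signMax (hp : ∑ i, p i = 0) (S : Finset (Fin n)) :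
    2 * ‖∑ i ∈ S, p i‖ ≤ signMax p := by
  rw [signMax_eq_sup'_of_sum_eq_zero p hp]
  exact le_sup' (fun S => 2 * ‖∑ i ∈ S, p i‖) (mem_univ S)

end SignMax

lemma signMax_eq_of_inner_eq {d : ℕ} (p : Fin (d + 1) → EuclideanSpace ℝ (Fin d)) (hd : 0 < d)
    (hp : ∑ i, p i = 0) (hunit : ∀ i, ‖p i‖ = 1) (hinner : ∀ i j, i ≠ j → ⟪p i, p j⟫ = -1 / d) :
    signMax p = 2 * √(((d / 2 + 1 : ℕ) : ℝ) * (d + 1 - (d / 2 + 1 : ℕ)) / d) := by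
  have hnorm (S : Finset (Fin (d + 1))) : ‖∑ i ∈ S, p i‖ ^ 2 = #S * (d + 1 - #S) / d := by
    have hd' : (d : ℝ) ≠ 0 := by positivity
    rw [norm_sq_sum_of_inner_eq hunit hinner]
    field_simp
    ring
  obtain ⟨S₀, -, hS₀⟩ := exists_subset_card_eq (s := (univ : Finset (Fin (d + 1))))
    (n := d / 2 + 1) (by rw [card_univ, Fintype.card_fin]; omega)
  refine le_antisymm ?_ ((two_mul_norm_sum_le_signMax p hp S₀).trans' ?_)
  · rw [signMax_eq_sup'_of_sum_eq_zero p hp]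
    refine sup'_le _ _ fun S _ => mul_le_mul_of_nonneg_left (Real.le_sqrt_of_sq_le ?_) zero_le_two
    have hS : #S ≤ d + 1 := (card_le_univ S).trans_eq (Fintype.card_fin _)
    have h := mul_sub_le_mul_sub_of_le_two_mul_of_two_mul_le (s := #S) (k := d / 2 + 1)
      (N := d + 1) (by omega) (by omega)
    rw [Nat.cast_add_one d] at h
    rw [hnorm]
    exact div_le_div_of_nonneg_right h (Nat.cast_nonneg d)
  · rw [mul_le_mul_iff_of_pos_left two_pos, Real.sqrt_le_left (norm_nonneg _), hnorm, hS₀]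

/-- Let `d ≥ 2` and let `p₁, …, p_{d+1} ∈ ℝ^d` satisfy `∑ᵢ pᵢ = 0` (centered
canonical form) and `∑ᵢ ‖pᵢ‖ = d+1` (the mean width of the regular rhombic dodecahedron with
unit generators). Then the circumradius `(1/2) max {‖∑ εᵢ pᵢ‖ : εᵢ ∈ {-1,1}}` is at least
`√(d+2)/2` for even `d` and at least `(d+1)/(2√d)` for odd `d`, with equality if and only if
all the `pᵢ` are unit vectors with `⟨pᵢ, pⱼ⟩ = -1/d` for `i ≠ j`, i.e. the zonotope
`∑ᵢ [0, pᵢ]` is a regular rhombic dodecahedron. -/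
theorem centered_rhombic_dodecahedron_circumradius_ge (d : ℕ) (hd : 2 ≤ d)
    (p : Fin (d + 1) → EuclideanSpace ℝ (Fin d))
    (hcenter : ∑ i, p i = 0) (hw : ∑ i, ‖p i‖ = (d : ℝ) + 1) :
    (if Even d then Real.sqrt ((d : ℝ) + 2) / 2 else ((d : ℝ) + 1) / (2 * Real.sqrt d)) ≤
      (1 / 2) * signMax p ∧
    ((1 / 2) * signMax p =
        (if Even d then Real.sqrt ((d : ℝ) + 2) / 2 else ((d : ℝ) + 1) / (2 * Real.sqrt d)) ↔
      (∀ i, ‖p i‖ = 1) ∧ ∀ i j, i ≠ j → (inner ℝ (p i) (p j) : ℝ) = -1 / d) := by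
  have hcard : Fintype.card (Fin (d + 1)) = d + 1 := Fintype.card_fin _
  have hhalf (S : Finset (Fin (d + 1))) : ‖∑ i ∈ S, p i‖ ≤ 1 / 2 * signMax p := by
    linarith [two_mul_norm_sum_le_signMax p hcenter S]
  rw [circumradius_bound_eq_sqrt (by omega)]
  refine ⟨?_, fun heq => ?_, fun ⟨hunit, hinner⟩ => ?_⟩
  · obtain ⟨S, -, hS⟩ :=
      exists_card_eq_sqrt_le_norm_sum p hcard hcenter hw (m := d / 2 + 1) (by omega) (by omega)
    exact hS.trans (hhalf S)
  · obtain ⟨hunit, hconst⟩ := forall_norm_eq_one_and_norm_sq_sum_eq_of_forall_le p hcard hcenter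
      hw (m := d / 2 + 1) (by omega) (by omega) fun S _ => heq ▸ hhalf S
    exact ⟨hunit, fun i j hij => inner_eq_neg_inv_of_forall_card_eq_norm_sq_sum_eq p hcard hcenter
      hunit (k := d / 2 + 1) (by omega) (by omega) hconst hij⟩
  · rw [signMax_eq_of_inner_eq p (by omega) hcenter hunit hinner]
    ring
end

section
/- Let d ≥ 3 be odd. Then there exist vectors p'_1, …, p'_{d+1} ∈ ℝ^d with Σ_{i=1}^{d+1} |p'_i| = d+1 such that (1/2)·max{ |Σ_{i=1}^{d+1} ε_i p'_i| : ε_i ∈ {−1, 1} } < (d+1)/(2√d). That is, among all rhombic dodecahedra with the mean width of the regular one, the regular rhombic dodecahedron does not minimize the circumradius when d is odd. -/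
/-!
Take three unit vectors at mutual angles of 120° in a plane together with an orthonormal basis
of the orthogonal complement. These `d + 1` unit vectors have total length `d + 1`, their
zonotope is a regular hexagon times a `(d - 2)`-cube, and every signed sum has squared norm at
most `4 + (d - 2) = d + 2 < (d + 1)² / d`.
-/

open EuclideanSpace

lemma signMax_le {d n : ℕ} {p : Fin n → EuclideanSpace ℝ (Fin d)} {C : ℝ}
    (h : ∀ ε : Fin n → ℝ, (∀ i, ε i = 1 ∨ ε i = -1) → ‖∑ i, ε i • p i‖ ≤ C) :
    signMax p ≤ C :=
  csSup_le ⟨_, fun _ => 1, fun _ => Or.inl rfl, rfl⟩ fun _ ⟨ε, hε, hr⟩ => hr ▸ h ε hε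

lemma norm_sq_eq_sum_succ_succ {m : ℕ} (x : EuclideanSpace ℝ (Fin (m + 2))) :
    ‖x‖ ^ 2 = x 0 ^ 2 + x 1 ^ 2 + ∑ k : Fin m, x k.succ.succ ^ 2 := by
  simp [real_norm_sq_eq, Fin.sum_univ_succ, add_assoc]

noncomputable def hexagonCubeGenerators (m : ℕ) :
    Fin (m + 2 + 1) → EuclideanSpace ℝ (Fin (m + 2)) :=
  Fin.cons (single 0 1) <| Fin.cons (single 0 (-1 / 2) + single 1 (√3 / 2)) <|
    Fin.cons (single 0 (-1 / 2) + single 1 (-(√3 / 2))) fun j => single j.succ.succ 1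

lemma norm_hexagonCubeGenerators (m : ℕ) (i : Fin (m + 2 + 1)) :
    ‖hexagonCubeGenerators m i‖ = 1 := by
  refine (pow_eq_one_iff_of_nonneg (norm_nonneg _) two_ne_zero).1 ?_
  rw [norm_sq_eq_sum_succ_succ]
  cases i using Fin.cases with
  | zero => simp [hexagonCubeGenerators]
  | succ i =>
    cases i using Fin.cases with
    | zero => simp [hexagonCubeGenerators, Fin.succ_succ_ne_one, div_pow]; norm_num
    | succ i =>
      cases i using Fin.cases with
      | zero =>
        simp only [hexagonCubeGenerators, Fin.cons_succ, Fin.cons_zero]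
        simp [Fin.succ_succ_ne_one, div_pow]; norm_num
      | succ j => simp [hexagonCubeGenerators, Fin.succ_inj, (Fin.succ_succ_ne_one j).symm]

lemma norm_sum_smul_hexagonCubeGenerators_sq (m : ℕ) (ε : Fin (m + 2 + 1) → ℝ) :
    ‖∑ i, ε i • hexagonCubeGenerators m i‖ ^ 2 =
      (ε 0 - ε 1 / 2 - ε 2 / 2) ^ 2 + 3 / 4 * (ε 1 - ε 2) ^ 2 +
        ∑ k : Fin m, ε k.succ.succ.succ ^ 2 := by
  rw [norm_sq_eq_sum_succ_succ]
  simp [Fin.sum_univ_succ, hexagonCubeGenerators, Fin.succ_succ_ne_one, Pi.single_apply,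
    Fin.succ_inj]
  linear_combination (ε 1 - ε 2) ^ 2 / 4 * Real.sq_sqrt (show (0 : ℝ) ≤ 3 by norm_num)

lemma hexagon_sq_le_four {a b c : ℝ} (ha : a = 1 ∨ a = -1) (hb : b = 1 ∨ b = -1)
    (hc : c = 1 ∨ c = -1) : (a - b / 2 - c / 2) ^ 2 + 3 / 4 * (b - c) ^ 2 ≤ 4 := by
  rcases ha with rfl | rfl <;> rcases hb with rfl | rfl <;> rcases hc with rfl | rfl <;> norm_num

lemma norm_sum_smul_hexagonCubeGenerators_le (m : ℕ) {ε : Fin (m + 2 + 1) → ℝ}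
    (hε : ∀ i, ε i = 1 ∨ ε i = -1) :
    ‖∑ i, ε i • hexagonCubeGenerators m i‖ ≤ √(m + 2 + 2) := by
  refine Real.le_sqrt_of_sq_le ?_
  have hcube : ∑ k : Fin m, ε k.succ.succ.succ ^ 2 = m := by
    simp [fun i => sq_eq_one_iff.2 (hε i)]
  rw [norm_sum_smul_hexagonCubeGenerators_sq, hcube]
  linarith [hexagon_sq_le_four (hε 0) (hε 1) (hε 2)]

lemma sqrt_add_two_lt_add_one_div_sqrt {x : ℝ} (hx : 0 < x) : √(x + 2) < (x + 1) / √x := by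
  rw [lt_div_iff₀ (Real.sqrt_pos.2 hx), ← Real.sqrt_mul (by positivity),
    Real.sqrt_lt' (by positivity)]
  nlinarith

theorem exists_rhombic_dodecahedron_circumradius_lt_regular_general (d : ℕ) (hd : 3 ≤ d) :
    ∃ p' : Fin (d + 1) → EuclideanSpace ℝ (Fin d),
      (∑ i, ‖p' i‖ = (d : ℝ) + 1) ∧
      (1 / 2) * signMax p' < ((d : ℝ) + 1) / (2 * Real.sqrt d) := by
  obtain ⟨m, rfl⟩ : ∃ m, d = m + 2 := ⟨d - 2, by omega⟩
  refine ⟨hexagonCubeGenerators m, by simp [norm_hexagonCubeGenerators], ?_⟩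
  have hmax : signMax (hexagonCubeGenerators m) ≤ √((m + 2 : ℕ) + 2) := by
    push_cast
    exact signMax_le fun _ => norm_sum_smul_hexagonCubeGenerators_le m
  calc 1 / 2 * signMax (hexagonCubeGenerators m) ≤ 1 / 2 * √((m + 2 : ℕ) + 2) := by gcongr
    _ < 1 / 2 * (((m + 2 : ℕ) + 1) / √(m + 2 : ℕ)) := by
      gcongr; exact sqrt_add_two_lt_add_one_div_sqrt (by positivity)
    _ = _ := by ring

/-- For odd `d ≥ 3` there exist vectors `p'₁, …, p'_{d+1} ∈ ℝ^d` with
`∑ᵢ ‖p'ᵢ‖ = d+1` (so the rhombic dodecahedron `∑ᵢ [0, p'ᵢ]` has the mean width of the regular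
one) whose circumradius `(1/2) max {‖∑ εᵢ p'ᵢ‖ : εᵢ ∈ {-1,1}}` is strictly smaller than
`(d+1)/(2√d)`, the circumradius of the regular rhombic dodecahedron. -/
theorem exists_rhombic_dodecahedron_circumradius_lt_regular (d : ℕ) (hd : 3 ≤ d)
    (hodd : Odd d) :
    ∃ p' : Fin (d + 1) → EuclideanSpace ℝ (Fin d),
      (∑ i, ‖p' i‖ = (d : ℝ) + 1) ∧
      (1 / 2) * signMax p' < ((d : ℝ) + 1) / (2 * Real.sqrt d) :=
  exists_rhombic_dodecahedron_circumradius_lt_regular_general d hd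
end

section
/- Let d ≥ 2 and let p_1, …, p_d ∈ ℝ^d satisfy Σ_{i=1}^d |p_i| = d. Then Σ_{1 ≤ i < j ≤ d} √( |p_i|²·|p_j|² − ⟨p_i, p_j⟩² ) ≤ binom(d, 2), with equality if and only if p_1, …, p_d form an orthonormal system. -/
/-!
Each area term is at most `‖pᵢ‖‖pⱼ‖`, with equality exactly when `pᵢ ⊥ pⱼ`. For the norms
`aᵢ = ‖pᵢ‖`, the constraint `∑ aᵢ = d` turns the elementary symmetric sum into
`∑_{i<j} aᵢaⱼ = C(d,2) - ½ ∑ (aᵢ - 1)²`, which is at most `C(d,2)` with equality exactly when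
every `aᵢ = 1`.
-/

open Finset
open scoped RealInnerProductSpace

section InnerProduct

variable {F : Type*} [NormedAddCommGroup F] [InnerProductSpace ℝ F] (x y : F)

theorem sqrt_norm_sq_mul_norm_sq_sub_inner_sq_le :
    √(‖x‖ ^ 2 * ‖y‖ ^ 2 - ⟪x, y⟫ ^ 2) ≤ ‖x‖ * ‖y‖ :=
  calc √(‖x‖ ^ 2 * ‖y‖ ^ 2 - ⟪x, y⟫ ^ 2) ≤ √((‖x‖ * ‖y‖) ^ 2) :=
        Real.sqrt_le_sqrt (by nlinarith [sq_nonneg ⟪x, y⟫])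
    _ = ‖x‖ * ‖y‖ := Real.sqrt_sq (by positivity)

theorem sqrt_norm_sq_mul_norm_sq_sub_inner_sq_eq_iff :
    √(‖x‖ ^ 2 * ‖y‖ ^ 2 - ⟪x, y⟫ ^ 2) = ‖x‖ * ‖y‖ ↔ ⟪x, y⟫ = 0 := by
  have hcs : ⟪x, y⟫ ^ 2 ≤ ‖x‖ ^ 2 * ‖y‖ ^ 2 := by
    simpa [sq, real_inner_self_eq_norm_sq] using real_inner_mul_inner_self_le x y
  rw [Real.sqrt_eq_iff_eq_sq (sub_nonneg.2 hcs) (by positivity), mul_pow, sub_eq_self,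
    pow_eq_zero_iff two_ne_zero]

end InnerProduct

theorem sum_sum_eq_sum_sum_iff_of_le {ι κ M : Type*} [AddCommMonoid M] [PartialOrder M]
    [IsOrderedCancelAddMonoid M] {s : Finset ι} {t : ι → Finset κ} {f g : ι → κ → M}
    (h : ∀ i ∈ s, ∀ j ∈ t i, f i j ≤ g i j) :
    ∑ i ∈ s, ∑ j ∈ t i, f i j = ∑ i ∈ s, ∑ j ∈ t i, g i j ↔
      ∀ i ∈ s, ∀ j ∈ t i, f i j = g i j := by
  rw [sum_eq_sum_iff_of_le fun i hi => sum_le_sum (h i hi)]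
  exact forall₂_congr fun i _ => sum_eq_sum_iff_of_le (h i ‹_›)

section PairSums

variable {ι : Type*} [Fintype ι] [LinearOrder ι] [LocallyFiniteOrderTop ι]
  [LocallyFiniteOrderBot ι]

theorem two_mul_sum_sum_Ioi_mul {R : Type*} [CommRing R] (a : ι → R) :
    2 * ∑ i, ∑ j ∈ Ioi i, a i * a j = (∑ i, a i) ^ 2 - ∑ i, a i ^ 2 := by
  classical
  have hrow (i : ι) : ∑ j ∈ {i}ᶜ, a j * a i = (∑ j, a j) * a i - a i ^ 2 := by
    rw [sum_mul, ← sum_compl_add_sum {i}, sum_singleton]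
    ring
  calc 2 * ∑ i, ∑ j ∈ Ioi i, a i * a j = ∑ i, ∑ j ∈ Ioi i, (a j * a i + a i * a j) := by
        simp_rw [mul_sum, mul_comm (a _) (a _), ← two_mul]
    _ = ∑ i, ((∑ j, a j) * a i - a i ^ 2) := by
        rw [sum_sum_Ioi_add_eq_sum_sum_off_diag]
        simp_rw [hrow]
    _ = (∑ i, a i) ^ 2 - ∑ i, a i ^ 2 := by rw [sum_sub_distrib, ← mul_sum, sq]

variable {a : ι → ℝ}

theorem two_mul_sum_sum_Ioi_mul_of_sum_eq_card (ha : ∑ i, a i = Fintype.card ι) :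
    2 * ∑ i, ∑ j ∈ Ioi i, a i * a j =
      2 * ((Fintype.card ι).choose 2 : ℝ) - ∑ i, (a i - 1) ^ 2 := by
  have hsq : ∑ i, (a i - 1) ^ 2 = ∑ i, a i ^ 2 - Fintype.card ι := by
    simp_rw [sub_sq, sum_add_distrib, sum_sub_distrib, ← sum_mul, ← mul_sum, ha]
    simp only [mul_one, one_pow, sum_const, card_univ, nsmul_eq_mul]
    ring
  rw [two_mul_sum_sum_Ioi_mul, hsq, ha, Nat.cast_choose_two]
  ring

theorem sum_sum_Ioi_mul_le_choose_two (ha : ∑ i, a i = Fintype.card ι) :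
    ∑ i, ∑ j ∈ Ioi i, a i * a j ≤ (Fintype.card ι).choose 2 := by
  have := two_mul_sum_sum_Ioi_mul_of_sum_eq_card ha
  linarith [sum_nonneg fun i (_ : i ∈ univ) => sq_nonneg (a i - 1)]

theorem sum_sum_Ioi_mul_eq_choose_two_iff (ha : ∑ i, a i = Fintype.card ι) :
    ∑ i, ∑ j ∈ Ioi i, a i * a j = (Fintype.card ι).choose 2 ↔ ∀ i, a i = 1 := by
  rw [← mul_right_inj' (two_ne_zero' ℝ), two_mul_sum_sum_Ioi_mul_of_sum_eq_card ha,
    sub_eq_self, sum_eq_zero_iff_of_nonneg fun i _ => sq_nonneg _]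
  simp [sub_eq_zero]

end PairSums

theorem parallelotope_V2_le_of_mean_width_eq_general (d : ℕ)
    (p : Fin d → EuclideanSpace ℝ (Fin d)) (hw : ∑ i, ‖p i‖ = (d : ℝ)) :
    (∑ i, ∑ j ∈ Finset.Ioi i,
        Real.sqrt (‖p i‖ ^ 2 * ‖p j‖ ^ 2 - (inner ℝ (p i) (p j) : ℝ) ^ 2)) ≤
      (d.choose 2 : ℝ) ∧
    ((∑ i, ∑ j ∈ Finset.Ioi i,
        Real.sqrt (‖p i‖ ^ 2 * ‖p j‖ ^ 2 - (inner ℝ (p i) (p j) : ℝ) ^ 2)) =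
        (d.choose 2 : ℝ) ↔ Orthonormal ℝ p) := by
  have hw' : ∑ i, ‖p i‖ = Fintype.card (Fin d) := by rw [hw, Fintype.card_fin]
  have hterm (i j : Fin d) := sqrt_norm_sq_mul_norm_sq_sub_inner_sq_le (p i) (p j)
  have hST := sum_le_sum fun i (_ : i ∈ univ) => sum_le_sum fun j (_ : j ∈ Ioi i) => hterm i j
  have hTC := sum_sum_Ioi_mul_le_choose_two hw'
  have hnorms := sum_sum_Ioi_mul_eq_choose_two_iff hw'
  rw [Fintype.card_fin] at hTC hnorms
  refine ⟨hST.trans hTC, fun hS => ?_, fun hp => ?_⟩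
  · have hT := le_antisymm hTC (hS ▸ hST)
    have hterms := (sum_sum_eq_sum_sum_iff_of_le fun i _ j _ => hterm i j).1 (hS.trans hT.symm)
    have hperp {i j : Fin d} (hij : i < j) : ⟪p i, p j⟫ = 0 :=
      (sqrt_norm_sq_mul_norm_sq_sub_inner_sq_eq_iff _ _).1 (hterms i (mem_univ i) j (mem_Ioi.2 hij))
    refine ⟨hnorms.1 hT, fun i j hij => ?_⟩
    rcases hij.lt_or_gt with hlt | hgt
    · exact hperp hlt
    · exact (real_inner_comm _ _).trans (hperp hgt)
  · rw [← hnorms.2 hp.1]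
    exact sum_congr rfl fun i _ => sum_congr rfl fun j hj =>
      (sqrt_norm_sq_mul_norm_sq_sub_inner_sq_eq_iff _ _).2 (hp.2 (mem_Ioi.1 hj).ne)

/-- Let `d ≥ 2` and `p₁, …, p_d ∈ ℝ^d` with `∑ᵢ ‖pᵢ‖ = d` (so the
parallelotope `∑ᵢ [0, pᵢ]` has the mean width of the unit cube). Then its second intrinsic
volume satisfies `∑_{i<j} √(‖pᵢ‖²‖pⱼ‖² - ⟨pᵢ, pⱼ⟩²) ≤ C(d,2)`, with equality if and only if
`p₁, …, p_d` is an orthonormal system. -/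
theorem parallelotope_V2_le_of_mean_width_eq (d : ℕ) (hd : 2 ≤ d)
    (p : Fin d → EuclideanSpace ℝ (Fin d)) (hw : ∑ i, ‖p i‖ = (d : ℝ)) :
    (∑ i, ∑ j ∈ Finset.Ioi i,
        Real.sqrt (‖p i‖ ^ 2 * ‖p j‖ ^ 2 - (inner ℝ (p i) (p j) : ℝ) ^ 2)) ≤
      (d.choose 2 : ℝ) ∧
    ((∑ i, ∑ j ∈ Finset.Ioi i,
        Real.sqrt (‖p i‖ ^ 2 * ‖p j‖ ^ 2 - (inner ℝ (p i) (p j) : ℝ) ^ 2)) =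
        (d.choose 2 : ℝ) ↔ Orthonormal ℝ p) :=
  parallelotope_V2_le_of_mean_width_eq_general d p hw
end

section
/- Let d ≥ 2 and let p_1, …, p_{d+1} ∈ ℝ^d be unit vectors. Then Σ_{1 ≤ i < j ≤ d+1} ⟨p_i, p_j⟩² ≥ (d+1)/(2d), with equality attained when ⟨p_i, p_j⟩ = −1/d for all i ≠ j. -/
/-!
Write `G i j = ⟪p i, p j⟫` and `M = ∑ i, p i ⊗ p i` for the frame operator on `ℝ^d`. In
coordinates, `∑ i j, G i j ^ 2 = ∑ k l, M k l ^ 2`, and `tr M = ∑ i, ‖p i‖ ^ 2 = d + 1`, so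
Cauchy–Schwarz on the diagonal of `M` gives `(d + 1) ^ 2 ≤ d * ∑ i j, G i j ^ 2`. As
`G i i = 1`, the double sum is `(d + 1) + 2 * ∑_{i < j} G i j ^ 2`, which is the bound.
-/

open Finset RealInnerProductSpace

theorem sum_sum_sq_sum_mul_comm {ι κ R : Type*} [Fintype ι] [Fintype κ] [CommSemiring R]
    (a : ι → κ → R) :
    ∑ i, ∑ j, (∑ k, a i k * a j k) ^ 2 = ∑ k, ∑ l, (∑ i, a i k * a i l) ^ 2 := by
  simp only [sq, sum_mul_sum, ← Fintype.sum_prod_type']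
  refine Fintype.sum_equiv ((Equiv.prodAssoc _ _ _).symm.trans
    ((Equiv.prodComm _ _).trans (Equiv.prodAssoc _ _ _))) _ _ fun _ => ?_
  simp only [Equiv.trans_apply, Equiv.prodAssoc_apply, Equiv.prodComm_apply,
    Equiv.prodAssoc_symm_apply, Prod.swap]
  ring

theorem sq_sum_sum_sq_le_card_mul_sum_sum_sq_sum_mul {ι κ : Type*} [Fintype ι] [Fintype κ]
    (a : ι → κ → ℝ) :
    (∑ i, ∑ k, a i k ^ 2) ^ 2 ≤ Fintype.card κ * ∑ i, ∑ j, (∑ k, a i k * a j k) ^ 2 := by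
  set M : κ → κ → ℝ := fun k l => ∑ i, a i k * a i l
  have htrace : ∑ i, ∑ k, a i k ^ 2 = ∑ k, M k k := by
    rw [sum_comm]
    simp only [M, sq]
  have hdiag : ∑ k, M k k ^ 2 ≤ ∑ k, ∑ l, M k l ^ 2 :=
    sum_le_sum fun k _ => single_le_sum (fun l _ => sq_nonneg (M k l)) (mem_univ k)
  calc (∑ i, ∑ k, a i k ^ 2) ^ 2 = (∑ k, M k k) ^ 2 := by rw [htrace]
    _ ≤ Fintype.card κ * ∑ k, M k k ^ 2 := sq_sum_le_card_mul_sum_sq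
    _ ≤ Fintype.card κ * ∑ k, ∑ l, M k l ^ 2 := by gcongr
    _ = Fintype.card κ * ∑ i, ∑ j, (∑ k, a i k * a j k) ^ 2 := by
      rw [sum_sum_sq_sum_mul_comm]

theorem sq_sum_norm_sq_le_finrank_mul_sum_sum_inner_sq {E ι : Type*} [NormedAddCommGroup E]
    [InnerProductSpace ℝ E] [FiniteDimensional ℝ E] [Fintype ι] (p : ι → E) :
    (∑ i, ‖p i‖ ^ 2) ^ 2 ≤ Module.finrank ℝ E * ∑ i, ∑ j, ⟪p i, p j⟫ ^ 2 := by
  set b := stdOrthonormalBasis ℝ E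
  have hinner : ∀ i j, ⟪p i, p j⟫ = ∑ k, ⟪b k, p i⟫ * ⟪b k, p j⟫ := fun i j => by
    simp only [← b.sum_inner_mul_inner (p i) (p j), real_inner_comm (p i)]
  simpa only [b.sum_sq_inner_right, ← hinner, Fintype.card_fin] using
    sq_sum_sum_sq_le_card_mul_sum_sum_sq_sum_mul fun i k => ⟪b k, p i⟫

theorem sum_sum_eq_sum_add_two_mul_sum_sum_Ioi {ι R : Type*} [Fintype ι] [LinearOrder ι]
    [LocallyFiniteOrderTop ι] [LocallyFiniteOrderBot ι] [CommSemiring R] {f : ι → ι → R}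
    (hf : ∀ i j, f i j = f j i) :
    ∑ i, ∑ j, f i j = ∑ i, f i i + 2 * ∑ i, ∑ j ∈ Ioi i, f i j := by
  have hoff := sum_sum_Ioi_add_eq_sum_sum_off_diag f
  simp only [hf _ _, ← two_mul, ← mul_sum] at hoff
  rw [hoff, ← sum_add_distrib]
  exact sum_congr rfl fun i _ => Fintype.sum_eq_add_sum_compl i _

theorem sum_sq_inner_ge_of_unit_vectors_general (d : ℕ)
    (p : Fin (d + 1) → EuclideanSpace ℝ (Fin d)) (hp : ∀ i, ‖p i‖ = 1) :
    ((d : ℝ) + 1) / (2 * d) ≤ ∑ i, ∑ j ∈ Finset.Ioi i, (inner ℝ (p i) (p j) : ℝ) ^ 2 ∧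
    ((∀ i j, i ≠ j → (inner ℝ (p i) (p j) : ℝ) = -1 / d) →
      (∑ i, ∑ j ∈ Finset.Ioi i, (inner ℝ (p i) (p j) : ℝ) ^ 2) = ((d : ℝ) + 1) / (2 * d)) := by
  set T := ∑ i, ∑ j ∈ Ioi i, ⟪p i, p j⟫ ^ 2
  have hdiag : ∀ i, ⟪p i, p i⟫ ^ 2 = 1 := fun i => by simp [hp]
  have hsplit : ∑ i, ∑ j, ⟪p i, p j⟫ ^ 2 = (d + 1) + 2 * T := by
    rw [sum_sum_eq_sum_add_two_mul_sum_sum_Ioi fun i j => by rw [real_inner_comm],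
      sum_congr rfl fun i _ => hdiag i]
    simp [T]
  have hframe := sq_sum_norm_sq_le_finrank_mul_sum_sum_inner_sq p
  simp only [hp, finrank_euclideanSpace_fin, hsplit, one_pow, sum_const, card_univ,
    Fintype.card_fin, nsmul_eq_mul, mul_one, Nat.cast_add, Nat.cast_one] at hframe
  have hd : (0 : ℝ) < d := by
    rcases Nat.eq_zero_or_pos d with rfl | hd
    · norm_num at hframe
    · exact_mod_cast hd
  refine ⟨by rw [div_le_iff₀ (by positivity)]; nlinarith, fun hreg => ?_⟩
  have hrow : ∀ i, ∑ j, ⟪p i, p j⟫ ^ 2 = 1 + d * (-1 / d) ^ 2 := fun i => by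
    rw [Fintype.sum_eq_add_sum_compl i, hdiag,
      sum_congr rfl fun j hj => by rw [hreg i j (by simpa [eq_comm] using hj)]]
    simp [card_compl]
  rw [sum_congr rfl fun i _ => hrow i] at hsplit
  simp only [sum_const, card_univ, Fintype.card_fin, nsmul_eq_mul] at hsplit
  field_simp at hsplit ⊢
  push_cast at hsplit
  linarith

/-- Let `d ≥ 2` and let `p₁, …, p_{d+1} ∈ ℝ^d` be unit vectors. Then
`∑_{i<j} ⟨pᵢ, pⱼ⟩² ≥ (d+1)/(2d)`, and equality is attained when `⟨pᵢ, pⱼ⟩ = -1/d` for all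
`i ≠ j`. -/
theorem sum_sq_inner_ge_of_unit_vectors (d : ℕ) (hd : 2 ≤ d)
    (p : Fin (d + 1) → EuclideanSpace ℝ (Fin d)) (hp : ∀ i, ‖p i‖ = 1) :
    ((d : ℝ) + 1) / (2 * d) ≤ ∑ i, ∑ j ∈ Finset.Ioi i, (inner ℝ (p i) (p j) : ℝ) ^ 2 ∧
    ((∀ i j, i ≠ j → (inner ℝ (p i) (p j) : ℝ) = -1 / d) →
      (∑ i, ∑ j ∈ Finset.Ioi i, (inner ℝ (p i) (p j) : ℝ) ^ 2) = ((d : ℝ) + 1) / (2 * d)) :=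
  sum_sq_inner_ge_of_unit_vectors_general d p hp
end

section
/- Let 1 ≤ k < m be integers and let x_1, …, x_m ≥ 0 be nonnegative real numbers. Then ( σ_m^k(x_1, …, x_m) / binom(m, k) )^{1/k} ≥ ( σ_m^{k+1}(x_1, …, x_m) / binom(m, k+1) )^{1/(k+1)}, with equality if and only if all the x_i are equal, or at least m−k+1 of them are zero. -/
/-!
Write `E_j = σ_j / C(n, j)` for the normalised elementary symmetric means of `n` reals.
Newton's inequalities `E_j E_{j+2} ≤ E_{j+1}²` hold for every real multiset. By Rolle's theorem
the derivative of `∏ (X - aᵢ)` again has only real roots, and these have the same means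
`E_0, …, E_{n-1}`; differentiating repeatedly reduces Newton's inequality to a multiset of
`j + 2` reals `y`. There it is the variance inequality `E_2 ≤ E_1²` for the products
`aᵢ = ∏_{l ≠ i} y_l`, whose `E_1` is `E_{j+1}(y)` and whose `E_2` is `E_j(y) E_{j+2}(y)`.

For nonnegative entries the Newton inequalities telescope to `E_{k+1}^k ≤ E_k^{k+1}`. If
equality holds with `E_{k+1} > 0`, every step of the telescope is an equality, down to
`E_2 = E_1²`, i.e. zero variance; if `E_{k+1} = 0`, equality forces `E_k = 0`, i.e. fewer than
`k` entries are nonzero.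
-/

open Finset

namespace Multiset

noncomputable def esymmMean (s : Multiset ℝ) (j : ℕ) : ℝ := s.esymm j / (card s).choose j

theorem esymmMean_zero (s : Multiset ℝ) : s.esymmMean 0 = 1 := by
  simp [esymmMean, esymm]

theorem esymmMean_eq_zero_of_card_lt {s : Multiset ℝ} {j : ℕ} (h : card s < j) :
    s.esymmMean j = 0 := by
  rw [esymmMean, Nat.choose_eq_zero_of_lt h, Nat.cast_zero, div_zero]

theorem esymmMean_map_univ {ι : Type*} [Fintype ι] (a : ι → ℝ) (j : ℕ) :
    (univ.val.map a).esymmMean j =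
      (∑ P ∈ univ.powersetCard j, ∏ i ∈ P, a i) / (Fintype.card ι).choose j := by
  rw [esymmMean, esymm_map_val, card_map, card_val, card_univ]

end Multiset

open Multiset

namespace Polynomial

theorem card_roots_derivative_of_card_roots_eq {p : ℝ[X]}
    (hp : card p.roots = p.natDegree) : card (derivative p).roots = p.natDegree - 1 := by
  have h₁ := card_roots_le_derivative p
  have h₂ := card_roots' (derivative p)
  rw [natDegree_derivative] at h₂
  omega

theorem esymmMean_roots_derivative {p : ℝ[X]} (hp : card p.roots = p.natDegree) {j : ℕ}
    (hj : j ≤ p.natDegree - 1) : (derivative p).roots.esymmMean j = p.roots.esymmMean j := by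
  set n := p.natDegree
  have hp' : card (derivative p).roots = n - 1 := card_roots_derivative_of_card_roots_eq hp
  rcases Nat.eq_zero_or_pos n with hn | hn
  · obtain rfl : j = 0 := by omega
    simp only [esymmMean_zero]
  have hlc : p.leadingCoeff ≠ 0 := by
    rw [Ne, leadingCoeff_eq_zero]
    rintro rfl
    simp [n] at hn
  have hdeg' : (derivative p).natDegree = n - 1 := natDegree_derivative p
  -- Vieta's formulas for `p` and `p'`, compared at the coefficient of `X ^ (n - 1 - j)`
  have hcoeff : (derivative p).coeff (n - 1 - j) = p.coeff (n - j) * ((n - j : ℕ) : ℝ) := by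
    rw [coeff_derivative, ← Nat.cast_add_one, show n - 1 - j + 1 = n - j by omega]
  rw [coeff_eq_esymm_roots_of_card (hp'.trans hdeg'.symm) (by omega),
    coeff_eq_esymm_roots_of_card hp (by omega), leadingCoeff_derivative, hdeg',
    show n - 1 - (n - 1 - j) = j by omega, show n - (n - j) = j by omega] at hcoeff
  have hvieta : (n : ℝ) * (derivative p).roots.esymm j = ((n - j : ℕ) : ℝ) * p.roots.esymm j :=
    mul_left_cancel₀ (mul_ne_zero hlc (pow_ne_zero j (neg_ne_zero.2 one_ne_zero)))
      (by linear_combination hcoeff)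
  have hchoose : ((n - 1).choose j : ℝ) * n = (n.choose j : ℝ) * ((n - j : ℕ) : ℝ) := by
    have := Nat.choose_mul_succ_eq (n - 1) j
    rw [Nat.sub_add_cancel hn] at this
    exact_mod_cast this
  have hpos : (0 : ℝ) < (n - 1).choose j := by exact_mod_cast Nat.choose_pos hj
  have hpos' : (0 : ℝ) < n.choose j := by exact_mod_cast Nat.choose_pos (by omega)
  have hn' : (0 : ℝ) < n := by exact_mod_cast hn
  rw [esymmMean, esymmMean, hp', hp, div_eq_div_iff hpos.ne' hpos'.ne']
  refine mul_right_cancel₀ hn'.ne' ?_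
  linear_combination (n.choose j : ℝ) * hvieta - p.roots.esymm j * hchoose

end Polynomial

namespace Multiset

open Polynomial in
theorem exists_card_eq_pred_esymmMean_eq (s : Multiset ℝ) :
    ∃ t : Multiset ℝ, card t = card s - 1 ∧ ∀ j ≤ card t, t.esymmMean j = s.esymmMean j := by
  set p : ℝ[X] := (s.map fun a => X - C a).prod
  have hroots : p.roots = s := roots_multiset_prod_X_sub_C s
  have hdeg : p.natDegree = card s := natDegree_multiset_prod_X_sub_C_eq_card s
  have hcard : card p.roots = p.natDegree := by rw [hroots, hdeg]
  have hcard' := card_roots_derivative_of_card_roots_eq hcard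
  refine ⟨(derivative p).roots, by rw [hcard', hdeg], fun j hj => ?_⟩
  rw [esymmMean_roots_derivative hcard (hcard' ▸ hj), hroots]

theorem exists_card_eq_esymmMean_eq (s : Multiset ℝ) {d : ℕ} (hd : d ≤ card s) :
    ∃ t : Multiset ℝ, card t = d ∧ ∀ j ≤ d, t.esymmMean j = s.esymmMean j := by
  obtain ⟨e, he⟩ := Nat.exists_eq_add_of_le hd
  induction e generalizing s with
  | zero => exact ⟨s, by omega, fun _ _ => rfl⟩
  | succ e ih =>
    obtain ⟨u, hu, hus⟩ := s.exists_card_eq_pred_esymmMean_eq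
    obtain ⟨t, ht, htu⟩ := ih u (by omega) (by omega)
    exact ⟨t, ht, fun j hj => (htu j hj).trans (hus j (by omega))⟩

end Multiset

namespace Finset

theorem sum_powersetCard_succ_insert {α β : Type*} [DecidableEq α] [AddCommMonoid β]
    {s : Finset α} {a : α} (ha : a ∉ s) (n : ℕ) (f : Finset α → β) :
    ∑ t ∈ (insert a s).powersetCard (n + 1), f t =
      ∑ t ∈ s.powersetCard (n + 1), f t + ∑ t ∈ s.powersetCard n, f (insert a t) := by
  rw [powersetCard_succ_insert ha, sum_union, sum_image]
  · exact fun t ht u hu h => by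
      rw [← erase_insert (notMem_mono (mem_powersetCard.1 ht).1 ha),
        ← erase_insert (notMem_mono (mem_powersetCard.1 hu).1 ha), h]
  · exact disjoint_left.2 fun t ht ht' => by
      obtain ⟨u, -, rfl⟩ := mem_image.1 ht'
      exact ha ((mem_powersetCard.1 ht).1 (mem_insert_self a u))

theorem two_mul_sum_powersetCard_two_prod {ι : Type*} (s : Finset ι) (a : ι → ℝ) :
    2 * ∑ P ∈ s.powersetCard 2, ∏ i ∈ P, a i = (∑ i ∈ s, a i) ^ 2 - ∑ i ∈ s, a i ^ 2 := by
  classical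
  induction s using Finset.induction_on with
  | empty => rw [powersetCard_eq_empty.2 (by simp)]; simp
  | insert x s hx ih =>
    rw [sum_powersetCard_succ_insert hx, powersetCard_one, sum_map, sum_insert hx,
      sum_insert hx]
    simp only [Function.Embedding.coeFn_mk]
    rw [sum_congr rfl fun y hy => prod_pair (ne_of_mem_of_not_mem hy hx).symm, ← mul_sum]
    linear_combination ih

theorem sum_sum_sub_sq {ι : Type*} (s : Finset ι) (a : ι → ℝ) :
    ∑ i ∈ s, ∑ j ∈ s, (a i - a j) ^ 2 = 2 * (#s * ∑ i ∈ s, a i ^ 2 - (∑ i ∈ s, a i) ^ 2) := by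
  simp only [sub_sq, sum_add_distrib, sum_sub_distrib, sum_const, nsmul_eq_mul, ← mul_sum,
    ← sum_mul, mul_assoc]
  ring

variable {ι : Type*} [Fintype ι] [DecidableEq ι]

theorem sum_powersetCard_compl {β : Type*} [AddCommMonoid β] (f : Finset ι → β) {k : ℕ}
    (hk : k ≤ Fintype.card ι) :
    ∑ P ∈ univ.powersetCard k, f Pᶜ = ∑ T ∈ univ.powersetCard (Fintype.card ι - k), f T :=
  sum_equiv ⟨compl, compl, compl_compl, compl_compl⟩
    (fun P => by
      have := card_le_univ P
      simp only [mem_powersetCard, subset_univ, true_and, Equiv.coe_fn_mk, card_compl]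
      omega)
    fun _ _ => rfl

theorem sum_powersetCard_card_sub_one_prod {β : Type*} [CommSemiring β] (y : ι → β)
    (h : 1 ≤ Fintype.card ι) :
    ∑ T ∈ univ.powersetCard (Fintype.card ι - 1), ∏ i ∈ T, y i = ∑ i, ∏ j ∈ {i}ᶜ, y j := by
  rw [← sum_powersetCard_compl _ h, powersetCard_one, sum_map]
  rfl

theorem prod_compl_singleton_mul_prod_compl_singleton {β : Type*} [CommMonoid β] (y : ι → β)
    {u v : ι} (huv : u ≠ v) :
    (∏ j ∈ {u}ᶜ, y j) * ∏ j ∈ {v}ᶜ, y j = (∏ j, y j) * ∏ j ∈ {u, v}ᶜ, y j := by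
  have hpair {a b : ι} (hab : a ≠ b) : ∏ j ∈ {b}ᶜ, y j = y a * ∏ j ∈ {a, b}ᶜ, y j := by
    rw [compl_insert, mul_prod_erase _ _ (by simpa using hab)]
  rw [← prod_mul_prod_compl {u}, prod_singleton, hpair huv.symm, hpair huv, pair_comm]
  ac_rfl

theorem sum_powersetCard_two_prod_compl_singleton {β : Type*} [CommSemiring β] (y : ι → β)
    (h : 2 ≤ Fintype.card ι) :
    ∑ P ∈ univ.powersetCard 2, ∏ i ∈ P, ∏ j ∈ {i}ᶜ, y j =
      (∏ j, y j) * ∑ T ∈ univ.powersetCard (Fintype.card ι - 2), ∏ i ∈ T, y i := by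
  rw [← sum_powersetCard_compl _ h, mul_sum]
  refine sum_congr rfl fun P hP => ?_
  obtain ⟨u, v, huv, rfl⟩ := card_eq_two.1 (mem_powersetCard.1 hP).2
  rw [prod_pair huv, prod_compl_singleton_mul_prod_compl_singleton y huv]

end Finset

namespace Multiset

section Variance

variable {ι : Type*} [Fintype ι]

theorem esymmMean_one_sq_sub_esymmMean_two (a : ι → ℝ) (h : 2 ≤ Fintype.card ι) :
    (univ.val.map a).esymmMean 1 ^ 2 - (univ.val.map a).esymmMean 2 =
      (∑ i, ∑ j, (a i - a j) ^ 2) / (2 * Fintype.card ι ^ 2 * (Fintype.card ι - 1)) := by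
  have hn : (2 : ℝ) ≤ Fintype.card ι := by exact_mod_cast h
  have hn' : (Fintype.card ι : ℝ) - 1 ≠ 0 := by linarith
  have hσ₂ : ∑ P ∈ univ.powersetCard 2, ∏ i ∈ P, a i = ((∑ i, a i) ^ 2 - ∑ i, a i ^ 2) / 2 := by
    linarith [two_mul_sum_powersetCard_two_prod univ a]
  rw [esymmMean_map_univ, esymmMean_map_univ, Nat.choose_one_right, Nat.cast_choose_two, hσ₂,
    Finset.powersetCard_one, Finset.sum_map, sum_sum_sub_sq, card_univ]
  simp only [Function.Embedding.coeFn_mk, Finset.prod_singleton]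
  field_simp
  ring

theorem esymmMean_two_le_sq (a : ι → ℝ) (h : 2 ≤ Fintype.card ι) :
    (univ.val.map a).esymmMean 2 ≤ (univ.val.map a).esymmMean 1 ^ 2 := by
  have hn : (2 : ℝ) ≤ Fintype.card ι := by exact_mod_cast h
  rw [← sub_nonneg, esymmMean_one_sq_sub_esymmMean_two a h]
  exact div_nonneg (by positivity) (mul_nonneg (by positivity) (by linarith))

theorem esymmMean_two_eq_sq_iff (a : ι → ℝ) (h : 2 ≤ Fintype.card ι) :
    (univ.val.map a).esymmMean 2 = (univ.val.map a).esymmMean 1 ^ 2 ↔ ∀ i j, a i = a j := by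
  have hn : (2 : ℝ) ≤ Fintype.card ι := by exact_mod_cast h
  rw [eq_comm, ← sub_eq_zero, esymmMean_one_sq_sub_esymmMean_two a h,
    div_eq_zero_iff, or_iff_left (by nlinarith),
    Finset.sum_eq_zero_iff_of_nonneg fun i _ => Finset.sum_nonneg fun j _ => sq_nonneg _]
  simp only [mem_univ, true_implies, Finset.sum_eq_zero_iff_of_nonneg fun j _ => sq_nonneg _,
    sq_eq_zero_iff, sub_eq_zero]

end Variance

theorem esymmMean_map_univ_mul_le_sq {ι : Type*} [Fintype ι] {n : ℕ} (y : ι → ℝ)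
    (hι : Fintype.card ι = n + 2) :
    (univ.val.map y).esymmMean n * (univ.val.map y).esymmMean (n + 2) ≤
      (univ.val.map y).esymmMean (n + 1) ^ 2 := by
  classical
  set a : ι → ℝ := fun i => ∏ j ∈ {i}ᶜ, y j
  have hσ₁ := sum_powersetCard_card_sub_one_prod y (by omega)
  have hσ₂ := sum_powersetCard_two_prod_compl_singleton y (by omega)
  have hσ₃ : ∑ T ∈ univ.powersetCard (n + 2), ∏ i ∈ T, y i = ∏ j, y j := by
    rw [← hι, ← card_univ, Finset.powersetCard_self, Finset.sum_singleton]
  rw [hι, show n + 2 - 1 = n + 1 by omega] at hσ₁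
  rw [hι, Nat.add_sub_cancel] at hσ₂
  have h₁ : (univ.val.map a).esymmMean 1 = (univ.val.map y).esymmMean (n + 1) := by
    rw [esymmMean_map_univ, esymmMean_map_univ, hσ₁, hι, Nat.choose_one_right,
      Nat.choose_succ_self_right, Finset.powersetCard_one, Finset.sum_map]
    simp only [Function.Embedding.coeFn_mk, Finset.prod_singleton, a]
  have h₂ : (univ.val.map a).esymmMean 2 =
      (univ.val.map y).esymmMean n * (univ.val.map y).esymmMean (n + 2) := by
    rw [esymmMean_map_univ, esymmMean_map_univ, esymmMean_map_univ, hσ₂, hσ₃, hι,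
      Nat.choose_self, Nat.choose_symm_add, Nat.cast_one, div_one]
    ring
  calc (univ.val.map y).esymmMean n * (univ.val.map y).esymmMean (n + 2)
      = (univ.val.map a).esymmMean 2 := h₂.symm
    _ ≤ (univ.val.map a).esymmMean 1 ^ 2 := esymmMean_two_le_sq a (by omega)
    _ = (univ.val.map y).esymmMean (n + 1) ^ 2 := by rw [h₁]

theorem esymmMean_mul_esymmMean_add_two_le_sq (s : Multiset ℝ) (j : ℕ) :
    s.esymmMean j * s.esymmMean (j + 2) ≤ s.esymmMean (j + 1) ^ 2 := by
  by_cases hj : j + 2 ≤ card s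
  · obtain ⟨t, ht, hts⟩ := s.exists_card_eq_esymmMean_eq hj
    rw [← hts j (by omega), ← hts (j + 2) le_rfl, ← hts (j + 1) (by omega)]
    simpa using esymmMean_map_univ_mul_le_sq (fun x : t => (x : ℝ)) (by simpa using ht)
  · rw [esymmMean_eq_zero_of_card_lt (j := j + 2) (by omega), mul_zero]
    positivity

end Multiset

theorem Real.rpow_one_div_le_rpow_one_div_iff {a b : ℝ} (ha : 0 ≤ a) (hb : 0 ≤ b) {p q : ℕ}
    (hp : p ≠ 0) (hq : q ≠ 0) : a ^ ((1 : ℝ) / p) ≤ b ^ ((1 : ℝ) / q) ↔ a ^ q ≤ b ^ p := by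
  have key {c : ℝ} (hc : 0 ≤ c) {r : ℕ} (hr : r ≠ 0) (s : ℕ) :
      (c ^ ((1 : ℝ) / r)) ^ (r * s) = c ^ s := by
    rw [one_div, pow_mul, Real.rpow_inv_natCast_pow hc hr]
  rw [← pow_le_pow_iff_left₀ (by positivity) (by positivity) (mul_ne_zero hp hq), key ha hp,
    mul_comm, key hb hq]

theorem Real.rpow_one_div_eq_rpow_one_div_iff {a b : ℝ} (ha : 0 ≤ a) (hb : 0 ≤ b) {p q : ℕ}
    (hp : p ≠ 0) (hq : q ≠ 0) : a ^ ((1 : ℝ) / p) = b ^ ((1 : ℝ) / q) ↔ a ^ q = b ^ p := by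
  rw [le_antisymm_iff, le_antisymm_iff, Real.rpow_one_div_le_rpow_one_div_iff ha hb hp hq,
    Real.rpow_one_div_le_rpow_one_div_iff hb ha hq hp]

theorem pow_mul_pow_le_pow_mul_pow_of_mul_le_sq {a b c : ℝ} (ha : 0 ≤ a) (hc : 0 ≤ c)
    (habc : a * c ≤ b ^ 2) (k : ℕ) : a ^ (k + 1) * c ^ (k + 1) ≤ b ^ k * b ^ (k + 2) := by
  rw [← mul_pow, ← pow_add, show k + (k + 2) = 2 * (k + 1) by ring, pow_mul]
  exact pow_le_pow_left₀ (mul_nonneg ha hc) habc _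

theorem pow_succ_le_pow_add_two_of_mul_le_sq {a b c : ℝ} {k : ℕ} (ha : 0 ≤ a) (hb : 0 < b)
    (hc : 0 ≤ c) (habc : a * c ≤ b ^ 2) (hab : b ^ k ≤ a ^ (k + 1)) :
    c ^ (k + 1) ≤ b ^ (k + 2) := by
  refine le_of_mul_le_mul_left ?_ (pow_pos hb k)
  calc b ^ k * c ^ (k + 1) ≤ a ^ (k + 1) * c ^ (k + 1) :=
        mul_le_mul_of_nonneg_right hab (pow_nonneg hc _)
    _ ≤ b ^ k * b ^ (k + 2) := pow_mul_pow_le_pow_mul_pow_of_mul_le_sq ha hc habc k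

theorem pow_eq_pow_succ_of_pow_succ_eq_pow_add_two {a b c : ℝ} {k : ℕ} (ha : 0 ≤ a)
    (hb : 0 < b) (hc : 0 ≤ c) (habc : a * c ≤ b ^ 2) (hab : b ^ k ≤ a ^ (k + 1))
    (hbc : c ^ (k + 1) = b ^ (k + 2)) : b ^ k = a ^ (k + 1) := by
  have hc' : 0 < c ^ (k + 1) := hbc ▸ pow_pos hb _
  refine mul_right_cancel₀ hc'.ne' (le_antisymm (mul_le_mul_of_nonneg_right hab hc'.le) ?_)
  calc a ^ (k + 1) * c ^ (k + 1) ≤ b ^ k * b ^ (k + 2) :=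
        pow_mul_pow_le_pow_mul_pow_of_mul_le_sq ha hc habc k
    _ = b ^ k * c ^ (k + 1) := by rw [hbc]

theorem pow_succ_le_pow_of_newton {p : ℕ → ℝ} (hp0 : p 0 = 1) (hnn : ∀ j, 0 ≤ p j)
    (hnewton : ∀ j, p j * p (j + 2) ≤ p (j + 1) ^ 2) (hzero : ∀ j, p j = 0 → p (j + 1) = 0)
    (k : ℕ) : p (k + 1) ^ k ≤ p k ^ (k + 1) := by
  induction k with
  | zero => simp [hp0]
  | succ k ih =>
    rcases (hnn (k + 1)).eq_or_lt with hb | hb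
    · rw [hzero (k + 1) hb.symm, zero_pow k.succ_ne_zero]
      positivity
    · exact pow_succ_le_pow_add_two_of_mul_le_sq (hnn k) hb (hnn (k + 2)) (hnewton k) ih

theorem sq_eq_of_pow_succ_eq_pow_of_newton {p : ℕ → ℝ} (hp0 : p 0 = 1) (hnn : ∀ j, 0 ≤ p j)
    (hnewton : ∀ j, p j * p (j + 2) ≤ p (j + 1) ^ 2) (hzero : ∀ j, p j = 0 → p (j + 1) = 0)
    {k : ℕ} (hk : 1 ≤ k) (hpos : 0 < p (k + 1)) (h : p (k + 1) ^ k = p k ^ (k + 1)) :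
    p 2 = p 1 ^ 2 := by
  induction k, hk using Nat.le_induction with
  | base => simpa using h
  | succ k hk ih =>
    have hb : 0 < p (k + 1) :=
      (hnn (k + 1)).lt_of_ne fun hb => hpos.ne' (hzero (k + 1) hb.symm)
    exact ih hb (pow_eq_pow_succ_of_pow_succ_eq_pow_add_two (hnn k) hb (hnn (k + 2)) (hnewton k)
      (pow_succ_le_pow_of_newton hp0 hnn hnewton hzero k) h)

namespace Multiset

variable {ι : Type*} [Fintype ι]

theorem esymmMean_map_univ_const (c : ℝ) {j : ℕ} (hj : j ≤ Fintype.card ι) :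
    (univ.val.map fun _ : ι => c).esymmMean j = c ^ j := by
  have hC : ((Fintype.card ι).choose j : ℝ) ≠ 0 := by exact_mod_cast (Nat.choose_pos hj).ne'
  simp only [esymmMean_map_univ, Finset.prod_const]
  rw [Finset.sum_powersetCard, card_univ, nsmul_eq_mul, mul_div_cancel_left₀ _ hC]

variable {x : ι → ℝ}

theorem esymmMean_map_univ_nonneg (hx : ∀ i, 0 ≤ x i) (j : ℕ) :
    0 ≤ (univ.val.map x).esymmMean j := by
  rw [esymmMean_map_univ]
  exact div_nonneg (Finset.sum_nonneg fun S _ => Finset.prod_nonneg fun i _ => hx i)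
    (by positivity)

theorem esymmMean_map_univ_eq_zero_iff (hx : ∀ i, 0 ≤ x i) (j : ℕ) :
    (univ.val.map x).esymmMean j = 0 ↔ #{i | x i ≠ 0} < j := by
  have hsupp : #{i | x i ≠ 0} ≤ Fintype.card ι := card_le_univ _
  rw [esymmMean_map_univ, div_eq_zero_iff, Nat.cast_eq_zero, Nat.choose_eq_zero_iff,
    Finset.sum_eq_zero_iff_of_nonneg fun S _ => Finset.prod_nonneg fun i _ => hx i]
  simp only [Finset.mem_powersetCard, subset_univ, true_and, Finset.prod_eq_zero_iff]
  constructor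
  · rintro (h | h)
    · by_contra! hj
      obtain ⟨S, hS, rfl⟩ := exists_subset_card_eq hj
      obtain ⟨i, hi, hxi⟩ := h S rfl
      exact (Finset.mem_filter.1 (hS hi)).2 hxi
    · omega
  · refine fun hj => Or.inl fun S hS => ?_
    by_contra! h
    have : #S ≤ #{i | x i ≠ 0} :=
      Finset.card_le_card fun i hi => Finset.mem_filter.2 ⟨mem_univ i, h i hi⟩
    omega

theorem esymmMean_map_univ_succ_eq_zero (hx : ∀ i, 0 ≤ x i) {j : ℕ}
    (h : (univ.val.map x).esymmMean j = 0) : (univ.val.map x).esymmMean (j + 1) = 0 :=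
  (esymmMean_map_univ_eq_zero_iff hx _).2
    (((esymmMean_map_univ_eq_zero_iff hx j).1 h).trans j.lt_succ_self)

theorem esymmMean_map_univ_succ_pow_le (hx : ∀ i, 0 ≤ x i) (k : ℕ) :
    (univ.val.map x).esymmMean (k + 1) ^ k ≤ (univ.val.map x).esymmMean k ^ (k + 1) :=
  pow_succ_le_pow_of_newton (esymmMean_zero _) (esymmMean_map_univ_nonneg hx)
    (esymmMean_mul_esymmMean_add_two_le_sq _) (fun _ => esymmMean_map_univ_succ_eq_zero hx) k

theorem esymmMean_map_univ_pow_eq_succ_pow_iff (hx : ∀ i, 0 ≤ x i) {k : ℕ} (hk : 1 ≤ k)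
    (hkι : k < Fintype.card ι) :
    (univ.val.map x).esymmMean k ^ (k + 1) = (univ.val.map x).esymmMean (k + 1) ^ k ↔
      (∀ i j, x i = x j) ∨ #{i | x i ≠ 0} < k := by
  have hzero := esymmMean_map_univ_eq_zero_iff hx
  constructor
  · intro h
    rcases (esymmMean_map_univ_nonneg hx (k + 1)).eq_or_lt with hb | hb
    · rw [← hb, zero_pow (by omega), pow_eq_zero_iff (by omega), hzero] at h
      exact Or.inr h
    · refine Or.inl ((esymmMean_two_eq_sq_iff x (by omega)).1 ?_)
      exact sq_eq_of_pow_succ_eq_pow_of_newton (esymmMean_zero _) (esymmMean_map_univ_nonneg hx)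
        (esymmMean_mul_esymmMean_add_two_le_sq _) (fun _ => esymmMean_map_univ_succ_eq_zero hx)
        hk hb h.symm
  · rintro (hconst | hsupp)
    · obtain ⟨i₀⟩ : Nonempty ι := Fintype.card_pos_iff.1 (by omega)
      rw [show x = fun _ => x i₀ from funext fun i => hconst i i₀,
        esymmMean_map_univ_const _ hkι.le, esymmMean_map_univ_const _ hkι, ← pow_mul,
        ← pow_mul, mul_comm]
    · rw [(hzero k).2 hsupp, (hzero (k + 1)).2 (by omega), zero_pow (by omega),
        zero_pow (by omega)]

end Multiset

/-- Maclaurin's inequality for nonnegative reals. Let `1 ≤ k < m` and let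
`x₁, …, x_m ≥ 0`. Then `(σ_m^k(x)/C(m,k))^{1/k} ≥ (σ_m^{k+1}(x)/C(m,k+1))^{1/(k+1)}`, where
`σ_m^j` is the `j`-th elementary symmetric polynomial, with equality if and only if all the
`xᵢ` are equal or at least `m - k + 1` of them are zero. -/
theorem maclaurin_nonneg (m k : ℕ) (hk : 1 ≤ k) (hkm : k < m)
    (x : Fin m → ℝ) (hx : ∀ i, 0 ≤ x i) :
    ((∑ S ∈ (Finset.univ : Finset (Fin m)).powersetCard (k + 1), ∏ i ∈ S, x i) /
        (m.choose (k + 1) : ℝ)) ^ ((1 : ℝ) / (k + 1)) ≤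
      ((∑ S ∈ (Finset.univ : Finset (Fin m)).powersetCard k, ∏ i ∈ S, x i) /
        (m.choose k : ℝ)) ^ ((1 : ℝ) / k) ∧
    (((∑ S ∈ (Finset.univ : Finset (Fin m)).powersetCard k, ∏ i ∈ S, x i) /
        (m.choose k : ℝ)) ^ ((1 : ℝ) / k) =
      ((∑ S ∈ (Finset.univ : Finset (Fin m)).powersetCard (k + 1), ∏ i ∈ S, x i) /
        (m.choose (k + 1) : ℝ)) ^ ((1 : ℝ) / (k + 1)) ↔
      (∀ i j, x i = x j) ∨
        m - k + 1 ≤ (Finset.univ.filter fun i => x i = 0).card) := by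
  have hmean (j : ℕ) : (∑ S ∈ univ.powersetCard j, ∏ i ∈ S, x i) / (m.choose j : ℝ) =
      (univ.val.map x).esymmMean j := by
    rw [esymmMean_map_univ, Fintype.card_fin]
  have hzeros : m - k + 1 ≤ #{i | x i = 0} ↔ #{i | x i ≠ 0} < k := by
    have := card_filter_add_card_filter_not (s := univ) fun i => x i = 0
    rw [card_univ, Fintype.card_fin] at this
    simp only [ne_eq]
    omega
  have hk₀ : k ≠ 0 := by omega
  have hle := Real.rpow_one_div_le_rpow_one_div_iff (esymmMean_map_univ_nonneg hx (k + 1))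
    (esymmMean_map_univ_nonneg hx k) k.succ_ne_zero hk₀
  have heq := Real.rpow_one_div_eq_rpow_one_div_iff (esymmMean_map_univ_nonneg hx k)
    (esymmMean_map_univ_nonneg hx (k + 1)) hk₀ k.succ_ne_zero
  push_cast at hle heq
  rw [hmean, hmean, hzeros, hle, heq]
  exact ⟨esymmMean_map_univ_succ_pow_le hx k,
    esymmMean_map_univ_pow_eq_succ_pow_iff hx hk (by simpa using hkm)⟩
end
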